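/- arXiv:math/9911037 — 7 statements merged into one kernel-verified Lean document; each statement's English description precedes it below -/
import Mathlib

section
/- Let α, β, and γ be vectors in ℓ² (real square-summable sequences) with ‖α‖₂ ≤ 1, ‖β‖₂ ≤ 1, ‖γ‖₂ ≤ 1, and let δ be a real number such that ‖α + β + γ‖₂/3 ≥ 1 − δ. Then max{‖α − β‖₂, ‖α − γ‖₂, ‖β − γ‖₂} ≤ √(18δ). -/
lemma pair_aux {E : Type*} [NormedAddCommGroup E] [InnerProductSpace ℝ E]
    (x y : E) (δ : ℝ) (hx : ‖x‖ ≤ 1) (hy : ‖y‖ ≤ 1) (hs : 2 - 3 * δ ≤ ‖x + y‖) :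
    ‖x - y‖ ≤ Real.sqrt (18 * δ) := by
  have hpar := parallelogram_law_with_norm ℝ x y
  have hsq : ‖x - y‖ ^ 2 ≤ 18 * δ := by
    rcases le_or_gt (2 - 3 * δ) 0 with hc | hc
    · have h2 : ‖x - y‖ ≤ 2 := by
        calc ‖x - y‖ ≤ ‖x‖ + ‖y‖ := norm_sub_le x y
        _ ≤ 2 := by linarith
      nlinarith [norm_nonneg (x - y)]
    · have h1 : (2 - 3 * δ) * (2 - 3 * δ) ≤ ‖x + y‖ * ‖x + y‖ :=
        mul_self_le_mul_self hc.le hs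
      rw [sq]
      nlinarith [mul_self_le_mul_self (norm_nonneg x) hx,
        mul_self_le_mul_self (norm_nonneg y) hy, mul_self_nonneg δ]
  calc ‖x - y‖ = Real.sqrt (‖x - y‖ ^ 2) := by
        rw [Real.sqrt_sq (norm_nonneg _)]
  _ ≤ Real.sqrt (18 * δ) := Real.sqrt_le_sqrt hsq

/-- **Lemma 1.** If `α`, `β`, `γ` lie in the unit ball of (real) `ℓ²` and
`‖α + β + γ‖₂ / 3 ≥ 1 - δ`, then each of the pairwise distances `‖α - β‖₂`,
`‖α - γ‖₂`, `‖β - γ‖₂` is at most `√(18 δ)`. -/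
theorem max_pairwise_dist_le_sqrt_of_near_unit_average
    (α β γ : lp (fun _ : ℕ => ℝ) 2) (δ : ℝ)
    (hα : ‖α‖ ≤ 1) (hβ : ‖β‖ ≤ 1) (hγ : ‖γ‖ ≤ 1)
    (h : 1 - δ ≤ ‖α + β + γ‖ / 3) :
    max (max ‖α - β‖ ‖α - γ‖) ‖β - γ‖ ≤ Real.sqrt (18 * δ) := by
  have hab : 2 - 3 * δ ≤ ‖α + β‖ := by
    have := norm_sub_norm_le (α + β + γ) γ
    simp only [add_sub_cancel_right] at this
    linarith
  have hac : 2 - 3 * δ ≤ ‖α + γ‖ := by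
    have e : α + γ = α + β + γ - β := by abel
    have := norm_sub_norm_le (α + β + γ) β
    rw [← e] at this
    linarith
  have hbc : 2 - 3 * δ ≤ ‖β + γ‖ := by
    have e : β + γ = α + β + γ - α := by abel
    have := norm_sub_norm_le (α + β + γ) α
    rw [← e] at this
    linarith
  exact max_le (max_le (pair_aux α β δ hα hβ hab) (pair_aux α γ δ hα hγ hac))
    (pair_aux β γ δ hβ hγ hbc)
end

section
/- Suppose |||·||| is a norm on X and ε > 0 satisfies ε‖x‖_X ≤ |||x||| ≤ ‖x‖_X for all x ∈ X, and suppose δ ∈ (0,1) is such that for every sequence (x_n) with |||x_n||| ≤ 1 for all n which is 2ε-separated with respect to |||·|||, there exist m < n with |||x_m + x_n|||/2 ≤ 1 − δ. Then for every n ∈ ℕ ∪ {0} there are pairwise incomparable nodes φ₁, …, φ_{2ⁿ} in T such that whenever γ_i, γ'_i are distinct branches passing through φ_i for 1 ≤ i ≤ 2ⁿ, and the branches {γ_i, γ'_i : 1 ≤ i ≤ 2ⁿ} have separated at level L, there is a sequence of nodes (ψ₁, …, ψ_{2^{n+1}}) ∈ S(γ₁, γ'₁, …, γ_{2ⁿ},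 γ'_{2ⁿ}; L) satisfying |||χ_{{ψ_i : 1 ≤ i ≤ 2^{n+1}}}||| ≤ (2(1−δ))^{n+1}. -/
open scoped BigOperators

/-- A node of the dyadic tree `T = ⋃ₙ {0,1}ⁿ`, modelled as a finite list of booleans.
The tree order `φ ≤ ψ` is the prefix order `φ <+: ψ`; the length of a node is its
list length. -/
abbrev Node : Type := List Bool

/-- The subtree `T_φ` consisting of all nodes `ψ` with `φ ≤ ψ`. -/
def Tsub (φ : Node) : Set Node := {ψ | φ <+: ψ}

/-- `S_φ`: the set of nodes extending `φ` by zeroes (`false`s) only. -/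
def Sset (φ : Node) : Set Node := {ψ | ∃ k : ℕ, ψ = φ ++ List.replicate k false}

/-- Two nodes are incomparable if neither is a prefix of the other. -/
def Incomparable (φ ψ : Node) : Prop := ¬ φ <+: ψ ∧ ¬ ψ <+: φ

/-- A finite set `A ⊆ T` is admissible if there is `n` such that every element of `A`
lies in some subtree `T_σ` with `|σ| = n`, and each such subtree contains at most one
element of `A`. -/
def Admissible (A : Finset Node) : Prop :=
  ∃ n : ℕ,
    (∀ φ ∈ A, ∃ σ : Node, σ.length = n ∧ σ <+: φ) ∧
    (∀ σ : Node, σ.length = n → ∀ φ ∈ A, ∀ ψ ∈ A, σ <+: φ → σ <+: ψ → φ = ψ)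

/-- A finite set `A ⊆ T` is acceptable if there is `n` such that every element of `A`
lies in some set `S_σ` with `|σ| = n`, and each such set contains at most one
element of `A`. -/
def Acceptable (A : Finset Node) : Prop :=
  ∃ n : ℕ,
    (∀ φ ∈ A, ∃ σ : Node, σ.length = n ∧ φ ∈ Sset σ) ∧
    (∀ σ : Node, σ.length = n → ∀ φ ∈ A, ∀ ψ ∈ A, φ ∈ Sset σ → ψ ∈ Sset σ → φ = ψ)

/-- `Before A B` is the relation `A ≪ B`: every node of `A` is strictly shorter than
every node of `B`. -/
def Before (A B : Finset Node) : Prop :=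
  ∀ φ ∈ A, ∀ ψ ∈ B, φ.length < ψ.length

/-- The norm `‖·‖_X` on `c₀₀(T)` (finitely supported functions on the tree, modelled
as `Node →₀ ℝ`): the supremum of `(∑ᵢ (∑_{φ ∈ Aᵢ} |x φ|)²)^{1/2}` over all finite
chains `A₁ ≪ ⋯ ≪ A_k` of admissible sets. -/
noncomputable def normX (x : Node →₀ ℝ) : ℝ :=
  sSup { r : ℝ | ∃ (k : ℕ) (A : Fin k → Finset Node),
    (∀ i, Admissible (A i)) ∧ (∀ i j : Fin k, i < j → Before (A i) (A j)) ∧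
    r = Real.sqrt (∑ i, (∑ φ ∈ A i, |x φ|) ^ 2) }

/-- The norm `‖·‖_Y` on `c₀₀(T)`: as `normX` but with acceptable sets. -/
noncomputable def normY (x : Node →₀ ℝ) : ℝ :=
  sSup { r : ℝ | ∃ (k : ℕ) (A : Fin k → Finset Node),
    (∀ i, Acceptable (A i)) ∧ (∀ i j : Fin k, i < j → Before (A i) (A j)) ∧
    r = Real.sqrt (∑ i, (∑ φ ∈ A i, |x φ|) ^ 2) }

/-- The characteristic function `χ_A` of a finite set of nodes, as an element of
`c₀₀(T)`. -/
noncomputable def chi (A : Finset Node) : Node →₀ ℝ :=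
  Finsupp.indicator A fun _ _ => (1 : ℝ)

open Classical in
/-- The sup norm `‖y·χ_S‖_∞` of the restriction of `y` to a set `S` of nodes. -/
noncomputable def supOn (y : Node →₀ ℝ) (S : Set Node) : ℝ :=
  sSup (Set.range fun ψ : Node => if ψ ∈ S then |y ψ| else 0)

/-- A branch of the dyadic tree, identified with an infinite 0-1 sequence. -/
abbrev Branch : Type := ℕ → Bool

/-- The node of length `n` on the branch `γ`. -/
def branchNode (γ : Branch) (n : ℕ) : Node := List.ofFn fun i : Fin n => γ i

/-- A branch `γ` passes through the node `φ` iff `φ ∈ γ`. -/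
def PassesThrough (γ : Branch) (φ : Node) : Prop := branchNode γ φ.length = φ

/-- A sequence is `ε`-separated: `inf {‖x_n - x_m‖ : m ≠ n} ≥ ε`. -/
def Separated {Z : Type*} [SeminormedAddGroup Z] (ε : ℝ) (x : ℕ → Z) : Prop :=
  ∀ m n : ℕ, m ≠ n → ε ≤ ‖x m - x n‖

/-- `ε`-separation with respect to a norm function `N`. -/
def SeparatedWith {Z : Type*} [AddGroup Z] (N : Z → ℝ) (ε : ℝ) (x : ℕ → Z) : Prop :=
  ∀ m n : ℕ, m ≠ n → ε ≤ N (x m - x n)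

/-- `N` is a norm on the real vector space `Z`. -/
def IsNormF {Z : Type*} [AddCommGroup Z] [Module ℝ Z] (N : Z → ℝ) : Prop :=
  (∀ x y : Z, N (x + y) ≤ N x + N y) ∧
  (∀ (a : ℝ) (x : Z), N (a • x) = |a| * N x) ∧
  (∀ x : Z, N x = 0 → x = 0)

/-- The `2`-NUC property with respect to a norm function `N`. -/
def TwoNUCWith {Z : Type*} [AddCommGroup Z] (N : Z → ℝ) : Prop :=
  ∀ ε : ℝ, 0 < ε → ∃ δ : ℝ, 0 < δ ∧ δ < 1 ∧
    ∀ u : ℕ → Z, (∀ n, N (u n) ≤ 1) → SeparatedWith N ε u →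
      ∃ n₁ n₂ : ℕ, n₁ < n₂ ∧ N (u n₁ + u n₂) / 2 ≤ 1 - δ

/-- The `1`-β property with respect to a norm function `N`. -/
def OneBetaWith {Z : Type*} [AddCommGroup Z] (N : Z → ℝ) : Prop :=
  ∀ ε : ℝ, 0 < ε → ∃ δ : ℝ, 0 < δ ∧ δ < 1 ∧
    ∀ x : Z, N x ≤ 1 → ∀ u : ℕ → Z, (∀ n, N (u n) ≤ 1) → SeparatedWith N ε u →
      ∃ n : ℕ, N (x + u n) / 2 ≤ 1 - δ

/-- The property `k`-β of a Banach space. -/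
def kBeta (k : ℕ) (Z : Type*) [NormedAddCommGroup Z] : Prop :=
  ∀ ε : ℝ, 0 < ε → ∃ δ : ℝ, 0 < δ ∧ δ < 1 ∧
    ∀ x : Z, ‖x‖ ≤ 1 → ∀ u : ℕ → Z, (∀ n, ‖u n‖ ≤ 1) → Separated ε u →
      ∃ ι : Fin k → ℕ, StrictMono ι ∧ ‖x + ∑ i, u (ι i)‖ / ((k : ℝ) + 1) ≤ 1 - δ

/-- The property `k`-NUC of a Banach space. -/
def kNUC (k : ℕ) (Z : Type*) [NormedAddCommGroup Z] : Prop :=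
  ∀ ε : ℝ, 0 < ε → ∃ δ : ℝ, 0 < δ ∧ δ < 1 ∧
    ∀ u : ℕ → Z, (∀ n, ‖u n‖ ≤ 1) → Separated ε u →
      ∃ ι : Fin k → ℕ, StrictMono ι ∧ ‖∑ i, u (ι i)‖ / (k : ℝ) ≤ 1 - δ

/-- Nearly uniform convexity. -/
def NUC (Z : Type*) [NormedAddCommGroup Z] [NormedSpace ℝ Z] : Prop :=
  ∀ ε : ℝ, 0 < ε → ∃ δ : ℝ, δ < 1 ∧
    ∀ u : ℕ → Z, (∀ n, ‖u n‖ ≤ 1) → Separated ε u →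
      ∃ y ∈ convexHull ℝ (Set.range u), ‖y‖ ≤ δ

section AuxNode

lemma branchNode_length (γ : Branch) (n : ℕ) : (branchNode γ n).length = n := by
  simp [branchNode]

lemma branchNode_succ (γ : Branch) (n : ℕ) :
    branchNode γ (n + 1) = (branchNode γ n).concat (γ n) := by
  rw [branchNode, List.ofFn_succ']
  rfl

lemma branchNode_prefix (γ : Branch) {m n : ℕ} (h : m ≤ n) :
    branchNode γ m <+: branchNode γ n := by
  induction n with
  | zero => simp_all
  | succ k ih =>
    rcases Nat.lt_or_ge m (k+1) with hlt | hge
    · have := ih (Nat.lt_succ_iff.mp hlt)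
      exact this.trans (by rw [branchNode_succ]; exact ⟨[γ k], by simp⟩)
    · have : m = k + 1 := le_antisymm h hge
      subst this; exact List.prefix_refl _

lemma branchNode_take (γ : Branch) {m n : ℕ} (h : m ≤ n) :
    (branchNode γ n).take m = branchNode γ m := by
  have := branchNode_prefix γ h
  have h2 := (List.prefix_iff_eq_take.mp this).symm
  rwa [branchNode_length] at h2

lemma passes_mono {γ : Branch} {μ ν : Node} (h : PassesThrough γ ν) (hp : μ <+: ν) :
    PassesThrough γ μ := by
  unfold PassesThrough at *
  have hl : μ.length ≤ ν.length := hp.length_le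
  rw [← branchNode_take γ hl, h, (List.prefix_iff_eq_take.mp hp).symm]

lemma passes_node {γ : Branch} {θ : Node} (h : PassesThrough γ θ) {ℓ : ℕ}
    (hl : θ.length ≤ ℓ) : θ <+: branchNode γ ℓ := by
  rw [← h]; exact branchNode_prefix γ hl

lemma sep_mono {γ γ' : Branch} {L ℓ : ℕ} (h : branchNode γ L ≠ branchNode γ' L)
    (hL : L ≤ ℓ) : branchNode γ ℓ ≠ branchNode γ' ℓ := by
  intro he
  exact h (by rw [← branchNode_take γ hL, ← branchNode_take γ' hL, he])

lemma incomp_of_ne_of_length_eq {a b : Node} (h : a ≠ b) (hl : a.length = b.length) :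
    Incomparable a b := by
  constructor
  · intro hp; exact h (hp.eq_of_length hl)
  · intro hp; exact h (hp.eq_of_length hl.symm).symm

lemma incomp_mono {a b a' b' : Node} (h : Incomparable a b) (ha : a <+: a') (hb : b <+: b') :
    Incomparable a' b' := by
  constructor
  · intro hp
    rcases List.prefix_or_prefix_of_prefix (ha.trans hp) hb with h1 | h1
    · exact h.1 h1
    · exact h.2 h1
  · intro hp
    rcases List.prefix_or_prefix_of_prefix (hb.trans hp) ha with h1 | h1
    · exact h.2 h1
    · exact h.1 h1

lemma branch_ne_of_incomp {γ γ' : Branch} {μ ν : Node} (hμ : PassesThrough γ μ)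
    (hν : PassesThrough γ' ν) (h : Incomparable μ ν) : γ ≠ γ' := by
  rintro rfl
  rcases Nat.le_total μ.length ν.length with hl | hl
  · exact h.1 (by rw [← hμ, ← hν]; exact branchNode_prefix γ hl)
  · exact h.2 (by rw [← hμ, ← hν]; exact branchNode_prefix γ hl)

lemma prefix_eq_of_length_eq {a b c : Node} (h1 : a <+: c) (h2 : b <+: c)
    (hl : a.length = b.length) : a = b :=
  (List.prefix_of_prefix_length_le h1 h2 hl.le).eq_of_length hl

end AuxNode
section AuxNorm

open Finset

/-- The defining set of `normX`. -/
def normXSet (x : Node →₀ ℝ) : Set ℝ :=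
  { r : ℝ | ∃ (k : ℕ) (A : Fin k → Finset Node),
    (∀ i, Admissible (A i)) ∧ (∀ i j : Fin k, i < j → Before (A i) (A j)) ∧
    r = Real.sqrt (∑ i, (∑ φ ∈ A i, |x φ|) ^ 2) }

lemma normX_eq (x : Node →₀ ℝ) : normX x = sSup (normXSet x) := rfl

lemma zero_mem_normXSet (x : Node →₀ ℝ) : (0 : ℝ) ∈ normXSet x := by
  refine ⟨0, Fin.elim0, fun i => i.elim0, fun i => i.elim0, by simp⟩

lemma sum_abs_le_l1 (x : Node →₀ ℝ) (s : Finset Node) :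
    ∑ φ ∈ s, |x φ| ≤ ∑ φ ∈ x.support, |x φ| := by
  classical
  have h1 : ∑ φ ∈ s, |x φ| = ∑ φ ∈ s.filter (fun φ => x φ ≠ 0), |x φ| := by
    rw [Finset.sum_filter_of_ne]
    intro φ _ hne
    intro h0
    exact hne (by rw [h0, abs_zero])
  rw [h1]
  apply Finset.sum_le_sum_of_subset_of_nonneg
  · intro φ hφ
    rw [Finset.mem_filter] at hφ
    exact Finsupp.mem_support_iff.mpr hφ.2
  · intro φ _ _; exact abs_nonneg _

lemma mem_normXSet_le (x : Node →₀ ℝ) {r : ℝ} (hr : r ∈ normXSet x) :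
    r ≤ ∑ φ ∈ x.support, |x φ| := by
  classical
  obtain ⟨k, A, hadm, hbef, rfl⟩ := hr
  set S := ∑ φ ∈ x.support, |x φ| with hS
  have hS0 : 0 ≤ S := Finset.sum_nonneg fun _ _ => abs_nonneg _
  set B : Fin k → Finset Node := fun i => (A i).filter (fun φ => x φ ≠ 0) with hB
  have hsum : ∀ i, ∑ φ ∈ A i, |x φ| = ∑ φ ∈ B i, |x φ| := by
    intro i
    rw [hB]
    rw [Finset.sum_filter_of_ne]
    intro φ _ hne h0
    exact hne (by rw [h0, abs_zero])
  have hdisj : ∀ i j : Fin k, i ≠ j → Disjoint (B i) (B j) := by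
    intro i j hij
    have key : ∀ a b : Fin k, a < b → Disjoint (B a) (B b) := by
      intro a b hab
      rw [Finset.disjoint_left]
      intro φ hφa hφb
      have h1 := hbef a b hab φ (Finset.filter_subset _ _ hφa) φ (Finset.filter_subset _ _ hφb)
      exact lt_irrefl _ h1
    rcases lt_or_gt_of_ne hij with h | h
    · exact key i j h
    · exact (key j i h).symm
  have hsum2 : ∑ i, ∑ φ ∈ B i, |x φ| ≤ S := by
    classical
    rw [← Finset.sum_biUnion]
    · apply Finset.sum_le_sum_of_subset_of_nonneg
      · intro φ hφ
        rw [Finset.mem_biUnion] at hφ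
        obtain ⟨i, _, hi⟩ := hφ
        rw [Finset.mem_filter] at hi
        exact Finsupp.mem_support_iff.mpr hi.2
      · intro φ _ _; exact abs_nonneg _
    · intro i _ j _ hij
      exact hdisj i j hij
  have hnn : ∀ i, 0 ≤ ∑ φ ∈ B i, |x φ| := fun i => Finset.sum_nonneg fun _ _ => abs_nonneg _
  have hsq : ∑ i, (∑ φ ∈ A i, |x φ|) ^ 2 ≤ S ^ 2 := by
    calc ∑ i, (∑ φ ∈ A i, |x φ|) ^ 2 = ∑ i, (∑ φ ∈ B i, |x φ|) ^ 2 := by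
          simp_rw [hsum]
      _ ≤ ∑ i, (∑ φ ∈ B i, |x φ|) * S := by
          apply Finset.sum_le_sum
          intro i _
          rw [pow_two]
          apply mul_le_mul_of_nonneg_left _ (hnn i)
          calc ∑ φ ∈ B i, |x φ| ≤ ∑ i, ∑ φ ∈ B i, |x φ| :=
                Finset.single_le_sum (fun i _ => hnn i) (Finset.mem_univ i)
            _ ≤ S := hsum2
      _ = (∑ i, ∑ φ ∈ B i, |x φ|) * S := by rw [Finset.sum_mul]
      _ ≤ S * S := mul_le_mul_of_nonneg_right hsum2 hS0
      _ = S ^ 2 := (pow_two S).symm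
  calc Real.sqrt (∑ i, (∑ φ ∈ A i, |x φ|) ^ 2) ≤ Real.sqrt (S ^ 2) :=
        Real.sqrt_le_sqrt hsq
    _ = S := by rw [Real.sqrt_sq hS0]

lemma normXSet_bddAbove (x : Node →₀ ℝ) : BddAbove (normXSet x) :=
  ⟨∑ φ ∈ x.support, |x φ|, fun _ hr => mem_normXSet_le x hr⟩

lemma normX_le_l1 (x : Node →₀ ℝ) : normX x ≤ ∑ φ ∈ x.support, |x φ| := by
  rw [normX_eq]
  exact csSup_le ⟨0, zero_mem_normXSet x⟩ (fun _ hr => mem_normXSet_le x hr)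

lemma le_normX_of_admissible (x : Node →₀ ℝ) {A : Finset Node} (hA : Admissible A) :
    ∑ φ ∈ A, |x φ| ≤ normX x := by
  rw [normX_eq]
  apply le_csSup (normXSet_bddAbove x)
  refine ⟨1, fun _ => A, fun _ => hA, ?_, ?_⟩
  · intro i j hij
    exact absurd hij (by omega)
  · rw [Fin.sum_univ_one, Real.sqrt_sq (Finset.sum_nonneg fun _ _ => abs_nonneg _)]

lemma chi_apply (A : Finset Node) (φ : Node) :
    chi A φ = if φ ∈ A then (1 : ℝ) else 0 := by
  classical
  simp [chi, Finsupp.indicator_apply]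

lemma normX_chi_le_card (A : Finset Node) : normX (chi A) ≤ A.card := by
  calc normX (chi A) ≤ ∑ φ ∈ (chi A).support, |chi A φ| := normX_le_l1 _
    _ ≤ ∑ φ ∈ A, |chi A φ| := by
        apply Finset.sum_le_sum_of_subset_of_nonneg
        · intro φ hφ
          have := Finsupp.mem_support_iff.mp hφ
          rw [chi_apply] at this
          by_contra hc
          simp [hc] at this
        · intro φ _ _; exact abs_nonneg _
    _ = A.card := by
        rw [Finset.sum_congr rfl (fun φ hφ => by rw [chi_apply, if_pos hφ, abs_one])]
        simp

lemma chi_union_disjoint {A B : Finset Node} (h : Disjoint A B) :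
    chi (A ∪ B) = chi A + chi B := by
  classical
  ext φ
  rw [Finsupp.add_apply, chi_apply, chi_apply, chi_apply]
  by_cases hA : φ ∈ A
  · have hB : φ ∉ B := Finset.disjoint_left.mp h hA
    simp [hA, hB, Finset.mem_union]
  · by_cases hB : φ ∈ B
    · simp [hA, hB, Finset.mem_union]
    · simp [hA, hB, Finset.mem_union]

end AuxNorm
section AuxSystem

open Finset

lemma injective_of_system {Q : Type*} (A : Q → Node) (ℓ : ℕ)
    (hlen : ∀ q, (A q).length = ℓ) (hinj : Function.Injective A)
    (ψ : Q → Node) (hpre : ∀ q, A q <+: ψ q) : Function.Injective ψ := by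
  intro q q' h
  apply hinj
  exact prefix_eq_of_length_eq (hpre q) (h ▸ hpre q') (by rw [hlen, hlen])

lemma admissible_of_system {Q : Type*} [Fintype Q] (A : Q → Node) (ℓ : ℕ)
    (hlen : ∀ q, (A q).length = ℓ) (hinj : Function.Injective A)
    (ψ : Q → Node) (hpre : ∀ q, A q <+: ψ q) :
    Admissible (Finset.image ψ Finset.univ) := by
  refine ⟨ℓ, ?_, ?_⟩
  · intro φ hφ
    rw [Finset.mem_image] at hφ
    obtain ⟨q, _, rfl⟩ := hφ
    exact ⟨A q, hlen q, hpre q⟩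
  · intro σ hσ φ hφ ψ' hψ' hpφ hpψ
    rw [Finset.mem_image] at hφ hψ'
    obtain ⟨q, _, rfl⟩ := hφ
    obtain ⟨q', _, rfl⟩ := hψ'
    have h1 : σ = A q := prefix_eq_of_length_eq hpφ (hpre q) (by rw [hσ, hlen])
    have h2 : σ = A q' := prefix_eq_of_length_eq hpψ (hpre q') (by rw [hσ, hlen])
    have : A q = A q' := h1 ▸ h2
    rw [hinj this]

lemma sum_abs_chi_sub {S T : Finset Node} (h : Disjoint S T) :
    ∑ φ ∈ S ∪ T, |(chi S - chi T) φ| = (S.card : ℝ) + T.card := by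
  classical
  have hval : ∀ φ ∈ S ∪ T, |(chi S - chi T) φ| = 1 := by
    intro φ hφ
    rw [Finsupp.sub_apply, chi_apply, chi_apply]
    rw [Finset.mem_union] at hφ
    rcases hφ with hS | hT
    · have hT : φ ∉ T := Finset.disjoint_left.mp h hS
      simp [hS, hT]
    · have hS : φ ∉ S := Finset.disjoint_right.mp h hT
      simp [hS, hT]
  rw [Finset.sum_congr rfl hval]
  rw [Finset.sum_const, Finset.card_union_of_disjoint h]
  simp [nsmul_eq_mul]

lemma le_normX_chi_sub {S T : Finset Node} (hdisj : Disjoint S T)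
    (hadm : Admissible (S ∪ T)) :
    (S.card : ℝ) + T.card ≤ normX (chi S - chi T) := by
  have := le_normX_of_admissible (chi S - chi T) hadm
  rwa [sum_abs_chi_sub hdisj] at this

end AuxSystem

section AuxNormF

variable {Z : Type*} [AddCommGroup Z] [Module ℝ Z] {N : Z → ℝ}

lemma IsNormF.neg (hN : IsNormF N) (x : Z) : N (-x) = N x := by
  have := hN.2.1 (-1) x
  simpa using this

lemma IsNormF.sub_comm (hN : IsNormF N) (x y : Z) : N (x - y) = N (y - x) := by
  rw [← hN.neg (y - x), neg_sub]

lemma IsNormF.smul' (hN : IsNormF N) (a : ℝ) (x : Z) : N (a • x) = |a| * N x := hN.2.1 a x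

end AuxNormF
section Core

open Finset

variable {X : Type*} [NormedAddCommGroup X] [NormedSpace ℝ X]

lemma core_lemma
    (j : (Node →₀ ℝ) →ₗ[ℝ] X)
    (hiso : ∀ y : Node →₀ ℝ, ‖j y‖ = normX y)
    (N : X → ℝ) (hN : IsNormF N) (ε : ℝ) (hε : 0 < ε)
    (hlow : ∀ x : X, ε * ‖x‖ ≤ N x)
    (δ : ℝ) (hδ1 : δ < 1)
    (hNUC : ∀ u : ℕ → X, (∀ n, N (u n) ≤ 1) → SeparatedWith N (2 * ε) u →
      ∃ m n : ℕ, m < n ∧ N (u m + u n) / 2 ≤ 1 - δ)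
    (K : Type*) [Fintype K]
    (B : ℝ) (hB0 : 0 < B) (hBcard : B ≤ (Fintype.card K : ℝ))
    (ρ : K → Node) (hρ : ∀ p q : K, p ≠ q → Incomparable (ρ p) (ρ q))
    (inner : ∀ θ : K → Node, (∀ p, ρ p <+: θ p) →
      (∀ p q : K, p ≠ q → Incomparable (θ p) (θ q)) →
      ∀ β : K → Branch, (∀ p, PassesThrough (β p) (θ p)) →
      ∀ L : ℕ, (∀ p q : K, p ≠ q → branchNode (β p) L ≠ branchNode (β q) L) →
      ∃ x : K → Node, (∀ p, branchNode (β p) L <+: x p) ∧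
        N (j (chi (Finset.image x Finset.univ))) ≤ B) :
    ∃ φ : K → Node, (∀ i i' : K, i ≠ i' → Incomparable (φ i) (φ i')) ∧
      ∀ (γ : K × Bool → Branch) (L : ℕ),
        (∀ i : K, γ (i, false) ≠ γ (i, true)) →
        (∀ p : K × Bool, PassesThrough (γ p) (φ p.1)) →
        (∀ p q : K × Bool, γ p ≠ γ q → branchNode (γ p) L ≠ branchNode (γ q) L) →
        ∃ ψ : K × Bool → Node, (∀ p, branchNode (γ p) L <+: ψ p) ∧
          N (j (chi (Finset.image ψ Finset.univ))) ≤ 2 * (1 - δ) * B := by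
  by_contra hcon
  push_neg at hcon
  have key : ∀ θ : K → Node, (∀ p, ρ p <+: θ p) →
      (∀ p q : K, p ≠ q → Incomparable (θ p) (θ q)) →
      ∃ (A : K × Bool → Node) (ℓ : ℕ) (x : K → Node) (θ' : K → Node),
        (∀ q, (A q).length = ℓ) ∧
        Function.Injective A ∧
        (∀ ψ : K × Bool → Node, (∀ q, A q <+: ψ q) →
            2 * (1 - δ) * B < N (j (chi (Finset.image ψ Finset.univ)))) ∧
        (∀ p, A (p, false) <+: x p) ∧
        N (j (chi (Finset.image x Finset.univ))) ≤ B ∧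
        (∀ p b, θ p <+: A (p, b)) ∧
        (∀ p, A (p, true) <+: θ' p) ∧
        (∀ p q, (x p).length < (θ' q).length) ∧
        (∀ p, ρ p <+: θ' p) ∧
        (∀ p q : K, p ≠ q → Incomparable (θ' p) (θ' q)) := by
    intro θ hθρ hθinc
    obtain ⟨γ, L, hg1, hg2, hg3, hbad⟩ := hcon θ hθinc
    set ℓ := max L (Finset.univ.sup fun p : K => (θ p).length) with hℓdef
    have hLℓ : L ≤ ℓ := le_max_left _ _
    have hθℓ : ∀ p, (θ p).length ≤ ℓ := fun p =>
      le_trans (Finset.le_sup (f := fun p : K => (θ p).length) (Finset.mem_univ p))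
        (le_max_right _ _)
    set A : K × Bool → Node := fun q => branchNode (γ q) ℓ with hAdef
    have γinj : ∀ q q' : K × Bool, q ≠ q' → γ q ≠ γ q' := by
      rintro ⟨p, b⟩ ⟨p', b'⟩ hne
      by_cases hp : p = p'
      · subst hp
        have hb : b ≠ b' := fun h => hne (by rw [h])
        cases b
        · cases b'
          · exact absurd rfl hb
          · exact hg1 p
        · cases b'
          · exact fun h => hg1 p h.symm
          · exact absurd rfl hb
      · exact branch_ne_of_incomp (hg2 (p, b)) (hg2 (p', b')) (hθinc p p' hp)
    have hAinj : Function.Injective A := by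
      intro q q' h
      by_contra hne
      exact sep_mono (hg3 q q' (γinj q q' hne)) hLℓ h
    have hA1 : ∀ q, (A q).length = ℓ := fun q => branchNode_length _ _
    have hbad' : ∀ ψ : K × Bool → Node, (∀ q, A q <+: ψ q) →
        2 * (1 - δ) * B < N (j (chi (Finset.image ψ Finset.univ))) := by
      intro ψ hψ
      exact hbad ψ fun q => (branchNode_prefix (γ q) hLℓ).trans (hψ q)
    have hA6 : ∀ p b, θ p <+: A (p, b) := fun p b => passes_node (hg2 (p, b)) (hθℓ p)
    obtain ⟨x, hx, hxnorm⟩ := inner θ hθρ hθinc (fun p => γ (p, false))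
      (fun p => hg2 (p, false)) ℓ
      (fun p q hpq => by
        intro h
        exact hpq (by
          have := hAinj (show A (p, false) = A (q, false) from h)
          exact (Prod.mk.injEq _ _ _ _).mp this |>.1))
    set M := max ℓ (1 + Finset.univ.sup fun p : K => (x p).length) with hMdef
    have hℓM : ℓ ≤ M := le_max_left _ _
    have hxM : ∀ p, (x p).length < M := by
      intro p
      have h1 : (x p).length ≤ Finset.univ.sup fun p : K => (x p).length :=
        Finset.le_sup (f := fun p : K => (x p).length) (Finset.mem_univ p)
      have h2 : 1 + (Finset.univ.sup fun p : K => (x p).length) ≤ M := le_max_right _ _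
      omega
    set θ' : K → Node := fun p => branchNode (γ (p, true)) M with hθ'def
    refine ⟨A, ℓ, x, θ', hA1, hAinj, hbad', hx, hxnorm, hA6, ?_, ?_, ?_, ?_⟩
    · intro p
      exact branchNode_prefix _ hℓM
    · intro p q
      have : (θ' q).length = M := branchNode_length _ _
      rw [this]
      exact hxM p
    · intro p
      exact (hθρ p).trans ((hA6 p true).trans (branchNode_prefix _ hℓM))
    · intro p q hpq
      apply incomp_of_ne_of_length_eq
      · exact sep_mono (hg3 _ _ (γinj (p, true) (q, true)
          (fun h => hpq ((Prod.mk.injEq _ _ _ _).mp h).1))) (hLℓ.trans hℓM)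
      · rw [branchNode_length, branchNode_length]
  choose Af ℓf xf θ'f hA1 hA2 hA3 hA4 hA5 hA6 hA7 hA8 hA9 hA10 using key
  let g : ℕ → {θ : K → Node // (∀ p, ρ p <+: θ p) ∧
      ∀ p q : K, p ≠ q → Incomparable (θ p) (θ q)} :=
    fun k => Nat.rec ⟨ρ, fun p => List.prefix_refl _, hρ⟩
      (fun _ s => ⟨θ'f s.1 s.2.1 s.2.2, hA9 s.1 s.2.1 s.2.2, hA10 s.1 s.2.1 s.2.2⟩) k
  let θs : ℕ → K → Node := fun k => (g k).1
  let As : ℕ → K × Bool → Node := fun k => Af (g k).1 (g k).2.1 (g k).2.2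
  let ℓs : ℕ → ℕ := fun k => ℓf (g k).1 (g k).2.1 (g k).2.2
  let xs : ℕ → K → Node := fun k => xf (g k).1 (g k).2.1 (g k).2.2
  have P1 : ∀ k q, (As k q).length = ℓs k := fun k => hA1 _ _ _
  have P2 : ∀ k, Function.Injective (As k) := fun k => hA2 _ _ _
  have P3 : ∀ k, ∀ ψ : K × Bool → Node, (∀ q, As k q <+: ψ q) →
      2 * (1 - δ) * B < N (j (chi (Finset.image ψ Finset.univ))) := fun k => hA3 _ _ _
  have P4 : ∀ k p, As k (p, false) <+: xs k p := fun k => hA4 _ _ _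
  have P5 : ∀ k, N (j (chi (Finset.image (xs k) Finset.univ))) ≤ B := fun k => hA5 _ _ _
  have P6 : ∀ k p b, θs k p <+: As k (p, b) := fun k => hA6 _ _ _
  have P7 : ∀ k p, As k (p, true) <+: θs (k + 1) p := fun k => hA7 _ _ _
  have P8 : ∀ k p q, (xs k p).length < (θs (k + 1) q).length := fun k => hA8 _ _ _
  have mono : ∀ m k : ℕ, m ≤ k → ∀ p, θs m p <+: θs k p := by
    intro m k h
    induction k, h using Nat.le_induction with
    | base => exact fun p => List.prefix_refl _
    | succ k hk ih => exact fun p => (ih p).trans ((P6 k p true).trans (P7 k p))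
  have xθ : ∀ k p, θs k p <+: xs k p := fun k p => (P6 k p false).trans (P4 k p)
  have F2 : ∀ m k : ℕ, m < k → ∀ p, As m (p, true) <+: xs k p :=
    fun m k h p => (P7 m p).trans ((mono (m + 1) k h p).trans (xθ k p))
  let Ψ : ℕ → Finset Node := fun k => Finset.image (xs k) Finset.univ
  let ψQ : ℕ → ℕ → K × Bool → Node := fun m k q => cond q.2 (xs k q.1) (xs m q.1)
  have preQ : ∀ m k : ℕ, m < k → ∀ q, As m q <+: ψQ m k q := by
    intro m k h q
    rcases q with ⟨p, b⟩
    cases b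
    · exact P4 m p
    · exact F2 m k h p
  have imageQ : ∀ m k : ℕ, Finset.image (ψQ m k) Finset.univ = Ψ m ∪ Ψ k := by
    intro m k
    ext φ
    simp only [Finset.mem_image, Finset.mem_union, Finset.mem_univ, true_and, Ψ, ψQ]
    constructor
    · rintro ⟨⟨p, b⟩, rfl⟩
      cases b
      · exact Or.inl ⟨p, rfl⟩
      · exact Or.inr ⟨p, rfl⟩
    · rintro (⟨p, rfl⟩ | ⟨p, rfl⟩)
      · exact ⟨(p, false), rfl⟩
      · exact ⟨(p, true), rfl⟩
  have hadmU : ∀ m k : ℕ, m < k → Admissible (Ψ m ∪ Ψ k) := by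
    intro m k h
    rw [← imageQ m k]
    exact admissible_of_system (As m) (ℓs m) (P1 m) (P2 m) (ψQ m k) (preQ m k h)
  have hdisjU : ∀ m k : ℕ, m < k → Disjoint (Ψ m) (Ψ k) := by
    intro m k h
    rw [Finset.disjoint_left]
    intro φ h1 h2
    simp only [Ψ, Finset.mem_image, Finset.mem_univ, true_and] at h1 h2
    obtain ⟨p, rfl⟩ := h1
    obtain ⟨q, heq⟩ := h2
    have hlt := P8 m p q
    have hle : (θs (m + 1) q).length ≤ (xs k q).length :=
      ((mono (m + 1) k h q).trans (xθ k q)).length_le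
    rw [heq] at hle
    omega
  have hinjx : ∀ k, Function.Injective (xs k) := by
    intro k
    apply injective_of_system (fun p => As k (p, false)) (ℓs k)
      (fun p => P1 k (p, false))
      (fun p q hh => by
        have := P2 k hh
        exact ((Prod.mk.injEq _ _ _ _).mp this).1)
      (xs k) (P4 k)
  have hcardΨ : ∀ k, ((Ψ k).card : ℝ) = Fintype.card K := by
    intro k
    rw [show Ψ k = Finset.image (xs k) Finset.univ from rfl,
      Finset.card_image_of_injective _ (hinjx k), Finset.card_univ]
  let u : ℕ → X := fun k => B⁻¹ • j (chi (Ψ k))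
  have hBinv : |B⁻¹| = B⁻¹ := abs_of_pos (inv_pos.mpr hB0)
  have hub : ∀ k, N (u k) ≤ 1 := by
    intro k
    have h1 : N (u k) = B⁻¹ * N (j (chi (Ψ k))) := by
      rw [show u k = B⁻¹ • j (chi (Ψ k)) from rfl, hN.smul', hBinv]
    rw [h1]
    calc B⁻¹ * N (j (chi (Ψ k))) ≤ B⁻¹ * B :=
          mul_le_mul_of_nonneg_left (P5 k) (inv_nonneg.mpr hB0.le)
      _ = 1 := inv_mul_cancel₀ hB0.ne'
  have main : ∀ m k : ℕ, m < k → 2 * ε ≤ N (u m - u k) := by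
    intro m k h
    have e1 : u m - u k = B⁻¹ • j (chi (Ψ m) - chi (Ψ k)) := by
      rw [show u m = B⁻¹ • j (chi (Ψ m)) from rfl, show u k = B⁻¹ • j (chi (Ψ k)) from rfl,
        map_sub, smul_sub]
    have hX : (2 * (Fintype.card K : ℝ)) ≤ normX (chi (Ψ m) - chi (Ψ k)) := by
      have := le_normX_chi_sub (hdisjU m k h) (hadmU m k h)
      rw [hcardΨ m, hcardΨ k] at this
      linarith
    have e2 : ‖u m - u k‖ = B⁻¹ * normX (chi (Ψ m) - chi (Ψ k)) := by
      rw [e1, norm_smul, hiso, Real.norm_eq_abs, hBinv]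
    have e3 : 2 * ε ≤ ε * ‖u m - u k‖ := by
      rw [e2]
      have h5 : (2 : ℝ) ≤ B⁻¹ * normX (chi (Ψ m) - chi (Ψ k)) := by
        have hBK : 2 * B ≤ 2 * (Fintype.card K : ℝ) := by linarith
        have h6 : 2 * B ≤ normX (chi (Ψ m) - chi (Ψ k)) := le_trans hBK hX
        calc ( 2 : ℝ) = B⁻¹ * (2 * B) := by field_simp
          _ ≤ B⁻¹ * normX (chi (Ψ m) - chi (Ψ k)) :=
              mul_le_mul_of_nonneg_left h6 (inv_nonneg.mpr hB0.le)
      nlinarith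
    exact e3.trans (hlow _)
  have hsep : SeparatedWith N (2 * ε) u := by
    intro m k hmk
    rcases lt_or_gt_of_ne hmk with h | h
    · exact main m k h
    · rw [hN.sub_comm]
      exact main k m h
  obtain ⟨m, k, hmk, hsum⟩ := hNUC u hub hsep
  have hU : chi (Ψ m) + chi (Ψ k) = chi (Ψ m ∪ Ψ k) :=
    (chi_union_disjoint (hdisjU m k hmk)).symm
  have e4 : u m + u k = B⁻¹ • j (chi (Ψ m ∪ Ψ k)) := by
    rw [show u m = B⁻¹ • j (chi (Ψ m)) from rfl, show u k = B⁻¹ • j (chi (Ψ k)) from rfl,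
      ← smul_add, ← map_add, hU]
  have e5 : N (j (chi (Ψ m ∪ Ψ k))) ≤ 2 * (1 - δ) * B := by
    have h6 : N (u m + u k) ≤ 2 * (1 - δ) := by linarith
    have h7 : N (j (chi (Ψ m ∪ Ψ k))) = B * N (u m + u k) := by
      calc N (j (chi (Ψ m ∪ Ψ k))) = N (B • (u m + u k)) := by
            rw [e4, smul_smul, mul_inv_cancel₀ hB0.ne', one_smul]
        _ = |B| * N (u m + u k) := hN.smul' _ _
        _ = B * N (u m + u k) := by rw [abs_of_pos hB0]
    rw [h7]
    calc B * N (u m + u k) ≤ B * (2 * (1 - δ)) :=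
          mul_le_mul_of_nonneg_left h6 hB0.le
      _ = 2 * (1 - δ) * B := by ring
  have e6 := P3 m (ψQ m k) (preQ m k hmk)
  rw [imageQ m k] at e6
  exact absurd e5 (not_le.mpr e6)



end Core
section Assemble

open Finset

variable {X : Type*} [NormedAddCommGroup X] [NormedSpace ℝ X]

/-- The inductive statement: existence of incomparable nodes with the branch property. -/
def PropKB (j : (Node →₀ ℝ) →ₗ[ℝ] X) (N : X → ℝ) (K : Type*) [Fintype K] (B : ℝ) : Prop :=
  ∃ φ : K → Node, (∀ i i' : K, i ≠ i' → Incomparable (φ i) (φ i')) ∧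
    ∀ (γ : K × Bool → Branch) (L : ℕ),
      (∀ i : K, γ (i, false) ≠ γ (i, true)) →
      (∀ p : K × Bool, PassesThrough (γ p) (φ p.1)) →
      (∀ p q : K × Bool, γ p ≠ γ q → branchNode (γ p) L ≠ branchNode (γ q) L) →
      ∃ ψ : K × Bool → Node, (∀ p, branchNode (γ p) L <+: ψ p) ∧
        N (j (chi (Finset.image ψ Finset.univ))) ≤ B

lemma norm_chi_image_le (j : (Node →₀ ℝ) →ₗ[ℝ] X)
    (hiso : ∀ y : Node →₀ ℝ, ‖j y‖ = normX y)
    (N : X → ℝ) (hup : ∀ x : X, N x ≤ ‖x‖)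
    {Q : Type*} [Fintype Q] (f : Q → Node) :
    N (j (chi (Finset.image f Finset.univ))) ≤ Fintype.card Q := by
  calc N (j (chi (Finset.image f Finset.univ))) ≤ ‖j (chi (Finset.image f Finset.univ))‖ :=
        hup _
    _ = normX (chi (Finset.image f Finset.univ)) := hiso _
    _ ≤ (Finset.image f Finset.univ).card := normX_chi_le_card _
    _ ≤ Fintype.card Q := by
        have := Finset.card_image_le (s := (Finset.univ : Finset Q)) (f := f)
        rw [Finset.card_univ] at this
        exact_mod_cast this

lemma transport_PropKB (j : (Node →₀ ℝ) →ₗ[ℝ] X) (N : X → ℝ) {K K' : Type*}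
    [Fintype K] [Fintype K'] (e : K ≃ K') {B : ℝ} (h : PropKB j N K B) :
    PropKB j N K' B := by
  obtain ⟨φ, hφ, hmain⟩ := h
  unfold PropKB
  refine ⟨φ ∘ e.symm, ?_, ?_⟩
  · intro i i' hne
    exact hφ _ _ (fun hc => hne (by simpa using congrArg e hc))
  · intro γ' L h1 h2 h3
    obtain ⟨ψ, hpre, hbound⟩ := hmain (fun p => γ' (e p.1, p.2)) L
      (fun i => h1 (e i))
      (fun p => by simpa using h2 (e p.1, p.2))
      (fun p q hne => h3 _ _ hne)
    refine ⟨fun q => ψ (e.symm q.1, q.2), ?_, ?_⟩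
    · intro p
      have := hpre (e.symm p.1, p.2)
      simpa using this
    · have himg : Finset.image (fun q : K' × Bool => ψ (e.symm q.1, q.2)) Finset.univ =
          Finset.image ψ Finset.univ := by
        ext x
        simp only [Finset.mem_image, Finset.mem_univ, true_and]
        constructor
        · rintro ⟨⟨a, b⟩, rfl⟩
          exact ⟨(e.symm a, b), rfl⟩
        · rintro ⟨⟨a, b⟩, rfl⟩
          exact ⟨(e a, b), by simp⟩
      rw [himg]
      exact hbound

lemma base_PropKB (j : (Node →₀ ℝ) →ₗ[ℝ] X)
    (hiso : ∀ y : Node →₀ ℝ, ‖j y‖ = normX y)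
    (N : X → ℝ) (hN : IsNormF N) (ε : ℝ) (hε : 0 < ε)
    (hlow : ∀ x : X, ε * ‖x‖ ≤ N x) (hup : ∀ x : X, N x ≤ ‖x‖)
    (δ : ℝ) (hδ1 : δ < 1)
    (hNUC : ∀ u : ℕ → X, (∀ n, N (u n) ≤ 1) → SeparatedWith N (2 * ε) u →
      ∃ m n : ℕ, m < n ∧ N (u m + u n) / 2 ≤ 1 - δ) :
    PropKB j N (Fin 1) (2 * (1 - δ) * 1) := by
  unfold PropKB
  apply core_lemma j hiso N hN ε hε hlow δ hδ1 hNUC (Fin 1) 1 one_pos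
    (by simp) (fun _ => ([] : Node))
    (fun p q hpq => absurd (Subsingleton.elim p q) hpq)
  intro θ hθρ hθinc β hβ L hsep
  refine ⟨fun p => branchNode (β p) L, fun p => List.prefix_refl _, ?_⟩
  have := norm_chi_image_le j hiso N hup (fun p : Fin 1 => branchNode (β p) L)
  simpa using this

lemma step_PropKB (j : (Node →₀ ℝ) →ₗ[ℝ] X)
    (hiso : ∀ y : Node →₀ ℝ, ‖j y‖ = normX y)
    (N : X → ℝ) (hN : IsNormF N) (ε : ℝ) (hε : 0 < ε)
    (hlow : ∀ x : X, ε * ‖x‖ ≤ N x)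
    (δ : ℝ) (hδ1 : δ < 1)
    (hNUC : ∀ u : ℕ → X, (∀ n, N (u n) ≤ 1) → SeparatedWith N (2 * ε) u →
      ∃ m n : ℕ, m < n ∧ N (u m + u n) / 2 ≤ 1 - δ)
    (K : Type*) [Fintype K] (B : ℝ) (hB0 : 0 < B)
    (hBcard : B ≤ ((Fintype.card (K × Bool)) : ℝ))
    (h : PropKB j N K B) : PropKB j N (K × Bool) (2 * (1 - δ) * B) := by
  obtain ⟨φ, hφ, hmain⟩ := h
  unfold PropKB
  apply core_lemma j hiso N hN ε hε hlow δ hδ1 hNUC (K × Bool) B hB0 hBcard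
    (fun p => φ p.1 ++ [p.2])
    (by
      rintro ⟨i, b⟩ ⟨i', b'⟩ hne
      by_cases hi : i = i'
      · subst hi
        have hb : b ≠ b' := fun hc => hne (by rw [hc])
        apply incomp_of_ne_of_length_eq
        · intro hc
          exact hb (by
            have := List.append_cancel_left hc
            simpa using this)
        · simp
      · exact incomp_mono (hφ i i' hi) (List.prefix_append _ _) (List.prefix_append _ _))
  intro θ hθρ hθinc β hβ L hsep
  obtain ⟨ψ, hpre, hbound⟩ := hmain β L
    (fun i => branch_ne_of_incomp (hβ (i, false)) (hβ (i, true))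
      (hθinc (i, false) (i, true) (by simp)))
    (fun p => passes_mono (hβ p) ((List.prefix_append (φ p.1) [p.2]).trans (hθρ p)))
    (fun p q hne => hsep p q (fun hc => hne (by rw [hc])))
  exact ⟨ψ, hpre, hbound⟩

end Assemble
lemma PropKB_congr {X : Type*} [NormedAddCommGroup X] [NormedSpace ℝ X]
    (j : (Node →₀ ℝ) →ₗ[ℝ] X) (N : X → ℝ) {K : Type*} [Fintype K] {B B' : ℝ}
    (h : PropKB j N K B) (hBB : B = B') : PropKB j N K B' := hBB ▸ h
/-- **Proposition 4 (main proposition).** Suppose `N = |||·|||` is an equivalent norm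
on `X` (the completion of `(c₀₀(T), ‖·‖_X)`, represented by a Banach space `X` with a
dense linear isometry `j`) with `ε ‖x‖ ≤ N x ≤ ‖x‖`, and `δ ∈ (0,1)` witnesses the
`2`-NUC condition for `N` at separation constant `2ε`.  Then for every `n` there are
pairwise incomparable nodes `φ₁, …, φ_{2ⁿ}` such that whenever `γ p` (for
`p : Fin (2ⁿ) × Bool`, with `γ (i, false)` and `γ (i, true)` playing the roles of
`γᵢ ≠ γ'ᵢ`) are branches through the `φᵢ` which have separated at level `L`, there is
a sequence of nodes `(ψ_p) ∈ S(γ₁, γ'₁, …, γ_{2ⁿ}, γ'_{2ⁿ}; L)` with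
`N (χ_{{ψ_p}}) ≤ (2(1-δ))^{n+1}`. -/
theorem main_proposition_X
    (X : Type*) [NormedAddCommGroup X] [NormedSpace ℝ X] [CompleteSpace X]
    (j : (Node →₀ ℝ) →ₗ[ℝ] X) (hdense : DenseRange j)
    (hiso : ∀ y : Node →₀ ℝ, ‖j y‖ = normX y)
    (N : X → ℝ) (hN : IsNormF N) (ε : ℝ) (hε : 0 < ε)
    (hlow : ∀ x : X, ε * ‖x‖ ≤ N x) (hup : ∀ x : X, N x ≤ ‖x‖)
    (δ : ℝ) (hδ0 : 0 < δ) (hδ1 : δ < 1)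
    (hNUC : ∀ u : ℕ → X, (∀ n, N (u n) ≤ 1) → SeparatedWith N (2 * ε) u →
      ∃ m n : ℕ, m < n ∧ N (u m + u n) / 2 ≤ 1 - δ) :
    ∀ n : ℕ, ∃ φ : Fin (2 ^ n) → Node,
      (∀ i i' : Fin (2 ^ n), i ≠ i' → Incomparable (φ i) (φ i')) ∧
      ∀ (γ : Fin (2 ^ n) × Bool → Branch) (L : ℕ),
        (∀ i : Fin (2 ^ n), γ (i, false) ≠ γ (i, true)) →
        (∀ p : Fin (2 ^ n) × Bool, PassesThrough (γ p) (φ p.1)) →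
        (∀ p q : Fin (2 ^ n) × Bool, γ p ≠ γ q →
          branchNode (γ p) L ≠ branchNode (γ q) L) →
        ∃ ψ : Fin (2 ^ n) × Bool → Node,
          (∀ p, branchNode (γ p) L <+: ψ p) ∧
          N (j (chi (Finset.image ψ Finset.univ))) ≤ (2 * (1 - δ)) ^ (n + 1) := by
  have h2δ : (0:ℝ) < 2 * (1 - δ) := by linarith
  have key : ∀ n : ℕ, PropKB j N (Fin (2 ^ n)) ((2 * (1 - δ)) ^ (n + 1)) := by
    intro n
    induction n with
    | zero =>
      have h := base_PropKB j hiso N hN ε hε hlow hup δ hδ1 hNUC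
      have e : Fin 1 ≃ Fin (2 ^ 0) := finCongr (by norm_num)
      exact PropKB_congr j N (transport_PropKB j N e h) (by ring)
    | succ n ih =>
      have hB0 : (0:ℝ) < (2 * (1 - δ)) ^ (n + 1) := pow_pos h2δ _
      have hcard : ((2 * (1 - δ)) : ℝ) ^ (n + 1) ≤
          (Fintype.card (Fin (2 ^ n) × Bool) : ℝ) := by
        rw [Fintype.card_prod, Fintype.card_fin, Fintype.card_bool]
        push_cast
        calc ((2 * (1 - δ)) : ℝ) ^ (n + 1) ≤ 2 ^ (n + 1) :=
              pow_le_pow_left₀ h2δ.le (by linarith) _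
          _ = (2:ℝ) ^ n * 2 := by ring
      have h := step_PropKB j hiso N hN ε hε hlow δ hδ1 hNUC (Fin (2 ^ n)) _ hB0 hcard ih
      have e : Fin (2 ^ n) × Bool ≃ Fin (2 ^ (n + 1)) :=
        (Equiv.prodCongr (Equiv.refl (Fin (2 ^ n))) finTwoEquiv.symm).trans
          (finProdFinEquiv.trans (finCongr (pow_succ 2 n).symm))
      exact PropKB_congr j N (transport_PropKB j N e h) (by ring)
  intro n
  exact key n
end

section
/- There is no equivalent 1-β norm on Y: if |||·||| is any norm on Y for which there exist constants c, C > 0 with c‖x‖_Y ≤ |||x||| ≤ C‖x‖_Y for all x ∈ Y, then (Y, |||·|||) is not 1-β. -/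
open scoped BigOperators

namespace TreeAux

noncomputable def massOf (x : Node →₀ ℝ) : ℝ := ∑ φ ∈ x.support, x φ

/-- Membership in the class `𝒲(n, D, cap)`: a nonnegative finitely supported vector
whose support consists of nodes of length at least `max D cap`, all of whose
coordinates beyond position `cap` are `false`, having some `true` coordinate beyond
position `n`, and which are pairwise distinguished by their first `cap` coordinates. -/
def Good (n D cap : ℕ) (x : Node →₀ ℝ) : Prop :=
  (∀ ν ∈ x.support, 0 < x ν) ∧
  (∀ ν ∈ x.support, D ≤ ν.length ∧ cap ≤ ν.length ∧
     (∀ b ∈ ν.drop cap, b = false) ∧ (∃ b ∈ ν.drop n, b = true)) ∧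
  (∀ ν ∈ x.support, ∀ ν' ∈ x.support, ν.take cap = ν'.take cap → ν = ν')

lemma mem_upper (x : Node →₀ ℝ) (r : ℝ)
    (hr : r ∈ { r : ℝ | ∃ (k : ℕ) (A : Fin k → Finset Node),
    (∀ i, Acceptable (A i)) ∧ (∀ i j : Fin k, i < j → Before (A i) (A j)) ∧
    r = Real.sqrt (∑ i, (∑ φ ∈ A i, |x φ|) ^ 2) }) :
    r ≤ ∑ φ ∈ x.support, |x φ| := by
  obtain ⟨k, A, hAcc, hBef, rfl⟩ := hr
  set T : ℝ := ∑ φ ∈ x.support, |x φ| with hT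
  have hTnn : 0 ≤ T := Finset.sum_nonneg fun _ _ => abs_nonneg _
  set s : Fin k → ℝ := fun i => ∑ φ ∈ A i, |x φ| with hs
  have hsnn : ∀ i, 0 ≤ s i := fun i => Finset.sum_nonneg fun _ _ => abs_nonneg _
  have hsum : ∑ i, s i ≤ T := by
    classical
    have hdisj : ∀ i j : Fin k, i ≠ j →
        Disjoint ((A i) ∩ x.support) ((A j) ∩ x.support) := by
      intro i j hij
      rcases lt_or_gt_of_ne hij with h | h
      · refine Finset.disjoint_left.2 fun φ h1 h2 => ?_
        exact absurd (hBef i j h φ (Finset.mem_of_mem_inter_left h1) φ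
          (Finset.mem_of_mem_inter_left h2)) (lt_irrefl _)
      · refine Finset.disjoint_left.2 fun φ h1 h2 => ?_
        exact absurd (hBef j i h φ (Finset.mem_of_mem_inter_left h2) φ
          (Finset.mem_of_mem_inter_left h1)) (lt_irrefl _)
    have h1 : ∀ i, s i = ∑ φ ∈ (A i ∩ x.support), |x φ| := by
      intro i
      refine (Finset.sum_subset (Finset.inter_subset_left) ?_).symm
      intro φ _ hφ
      have : x φ = 0 := by
        by_contra hne
        exact hφ (Finset.mem_inter.2 ⟨‹φ ∈ A i›, Finsupp.mem_support_iff.2 hne⟩)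
      simp [this]
    calc ∑ i, s i = ∑ i, ∑ φ ∈ (A i ∩ x.support), |x φ| := by
          exact Finset.sum_congr rfl fun i _ => h1 i
      _ = ∑ φ ∈ Finset.univ.biUnion (fun i => A i ∩ x.support), |x φ| := by
          exact (Finset.sum_biUnion (fun i _ j _ hij => hdisj i j hij)).symm
      _ ≤ T := by
          refine Finset.sum_le_sum_of_subset_of_nonneg ?_ (fun _ _ _ => abs_nonneg _)
          intro φ hφ
          rcases Finset.mem_biUnion.1 hφ with ⟨i, _, hi⟩
          exact Finset.mem_of_mem_inter_right hi
  have hsq : ∑ i, (s i)^2 ≤ (∑ i, s i)^2 := by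
    have : ∀ i ∈ Finset.univ, (s i)^2 ≤ s i * ∑ j, s j := by
      intro i _
      rw [sq]
      exact mul_le_mul_of_nonneg_left
        (Finset.single_le_sum (fun j _ => hsnn j) (Finset.mem_univ i)) (hsnn i)
    calc ∑ i, (s i)^2 ≤ ∑ i, s i * ∑ j, s j := Finset.sum_le_sum this
      _ = (∑ i, s i)^2 := by rw [← Finset.sum_mul, sq]
  calc Real.sqrt (∑ i, (s i)^2) ≤ Real.sqrt ((∑ i, s i)^2) := Real.sqrt_le_sqrt hsq
    _ = ∑ i, s i := Real.sqrt_sq (Finset.sum_nonneg fun i _ => hsnn i)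
    _ ≤ T := hsum

lemma normY_bddAbove (x : Node →₀ ℝ) :
    BddAbove { r : ℝ | ∃ (k : ℕ) (A : Fin k → Finset Node),
    (∀ i, Acceptable (A i)) ∧ (∀ i j : Fin k, i < j → Before (A i) (A j)) ∧
    r = Real.sqrt (∑ i, (∑ φ ∈ A i, |x φ|) ^ 2) } :=
  ⟨_, fun r hr => mem_upper x r hr⟩

lemma normY_le_l1 (x : Node →₀ ℝ) : normY x ≤ ∑ φ ∈ x.support, |x φ| := by
  apply csSup_le
  · exact ⟨0, 0, Fin.elim0, fun i => i.elim0, fun i => i.elim0, by simp⟩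
  · exact fun r hr => mem_upper x r hr

lemma sum_le_normY (x : Node →₀ ℝ) (A : Finset Node) (hA : Acceptable A) :
    ∑ φ ∈ A, |x φ| ≤ normY x := by
  apply le_csSup (normY_bddAbove x)
  refine ⟨1, fun _ => A, fun _ => hA, fun i j hij => absurd hij (by omega), ?_⟩
  rw [show ∑ i : Fin 1, (∑ φ ∈ A, |x φ|)^2 = (∑ φ ∈ A, |x φ|)^2 by simp]
  rw [Real.sqrt_sq (Finset.sum_nonneg fun _ _ => abs_nonneg _)]

lemma take_eq_of_Sset {σ φ : Node} (h : φ ∈ Sset σ) : φ.take σ.length = σ := by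
  obtain ⟨k, rfl⟩ := h
  exact List.take_left

lemma good_acceptable {n D cap : ℕ} {x : Node →₀ ℝ} (hx : Good n D cap x) :
    Acceptable x.support := by
  obtain ⟨hpos, hnode, hinj⟩ := hx
  refine ⟨cap, ?_, ?_⟩
  · intro φ hφ
    obtain ⟨hD, hcap, hdrop, _⟩ := hnode φ hφ
    refine ⟨φ.take cap, List.length_take_of_le hcap, ⟨φ.length - cap, ?_⟩⟩
    conv_lhs => rw [← List.take_append_drop cap φ]
    congr 1
    refine List.eq_replicate_iff.2 ⟨by simp, hdrop⟩
  · intro σ hσ φ hφ ψ hψ hφS hψS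
    apply hinj φ hφ ψ hψ
    rw [← hσ] at *
    rw [take_eq_of_Sset hφS, take_eq_of_Sset hψS]

lemma good_mass_abs {n D cap : ℕ} {x : Node →₀ ℝ} (hx : Good n D cap x) :
    ∑ φ ∈ x.support, |x φ| = massOf x :=
  Finset.sum_congr rfl fun φ hφ => abs_of_pos (hx.1 φ hφ)

lemma good_mass_pos {n D cap : ℕ} {x : Node →₀ ℝ} (hx : Good n D cap x)
    (hne : x.support.Nonempty) : 0 < massOf x :=
  Finset.sum_pos (fun φ hφ => hx.1 φ hφ) hne

lemma good_normY_eq {n D cap : ℕ} {x : Node →₀ ℝ} (hx : Good n D cap x) :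
    normY x = massOf x := by
  refine le_antisymm ?_ ?_
  · rw [← good_mass_abs hx]; exact normY_le_l1 x
  · rw [← good_mass_abs hx]; exact sum_le_normY x x.support (good_acceptable hx)

lemma drop_le_drop {m n : ℕ} (h : m ≤ n) (l : Node) {b : Bool} (hb : b ∈ l.drop n) :
    b ∈ l.drop m := by
  have : l.drop n = (l.drop m).drop (n - m) := by
    rw [List.drop_drop]; congr 1; omega
  rw [this] at hb
  exact List.drop_subset _ _ hb

lemma mem_drop_take {c₁ cz : ℕ} {l : Node} {b : Bool} (hb : b ∈ (l.take cz).drop c₁) :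
    b ∈ l.drop c₁ := by
  rw [List.drop_take] at hb
  exact List.take_subset _ _ hb

lemma good_smul {n D cap : ℕ} {x : Node →₀ ℝ} (hx : Good n D cap x) {a : ℝ} (ha : 0 < a) :
    Good n D cap (a • x) ∧ (a • x).support = x.support ∧ massOf (a • x) = a * massOf x := by
  have hsupp : (a • x).support = x.support := Finsupp.support_smul_eq (ne_of_gt ha)
  refine ⟨⟨?_, ?_, ?_⟩, hsupp, ?_⟩
  · intro ν hν
    rw [hsupp] at hν
    have := hx.1 ν hν
    simp only [Finsupp.smul_apply, smul_eq_mul]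
    positivity
  · intro ν hν; rw [hsupp] at hν; exact hx.2.1 ν hν
  · intro ν hν ν' hν' h; rw [hsupp] at hν hν'; exact hx.2.2 ν hν ν' hν' h
  · rw [massOf, hsupp, massOf, Finset.mul_sum]
    exact Finset.sum_congr rfl fun φ _ => by simp [mul_comm]

/-- Combining a `𝒲(n₀, Dy, c₁)` vector with a `𝒲(c₁, Dz, cz)` vector gives a
`𝒲(n₀, D₀, cz)` vector. -/
lemma good_add {n₀ Dy c₁ Dz cz D₀ : ℕ} {y z : Node →₀ ℝ}
    (hy : Good n₀ Dy c₁ y) (hz : Good c₁ Dz cz z)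
    (hn₀ : n₀ ≤ c₁) (hc₁ : c₁ ≤ cz) (hDy : D₀ ≤ Dy) (hDz : D₀ ≤ Dz) (hDycz : cz ≤ Dy) :
    Disjoint y.support z.support ∧ Good n₀ D₀ cz (y + z) ∧
      (y + z).support = y.support ∪ z.support := by
  have hdisj : Disjoint y.support z.support := by
    refine Finset.disjoint_left.2 fun ν hν hν' => ?_
    obtain ⟨b, hb, hbt⟩ := (hz.2.1 ν hν').2.2.2
    have := (hy.2.1 ν hν).2.2.1 b hb
    simp [hbt] at this
  have hsupp : (y + z).support = y.support ∪ z.support := Finsupp.support_add_eq hdisj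
  have hyval : ∀ ν ∈ y.support, (y + z) ν = y ν := by
    intro ν hν
    have : z ν = 0 := Finsupp.notMem_support_iff.1 (Finset.disjoint_left.1 hdisj hν)
    simp [this]
  have hzval : ∀ ν ∈ z.support, (y + z) ν = z ν := by
    intro ν hν
    have : y ν = 0 := Finsupp.notMem_support_iff.1 (Finset.disjoint_right.1 hdisj hν)
    simp [this]
  have hyfalse : ∀ ν ∈ y.support, ∀ b ∈ (ν.take cz).drop c₁, b = false := fun ν hν b hb =>
    (hy.2.1 ν hν).2.2.1 b (mem_drop_take hb)
  have hztrue : ∀ ν ∈ z.support, ∃ b ∈ (ν.take cz).drop c₁, b = true := by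
    intro ν hν
    obtain ⟨hD, hcap, hdropf, b, hb, hbt⟩ := hz.2.1 ν hν
    have hlen : (ν.take cz).length = cz := List.length_take_of_le hcap
    have hsplit : ν.drop c₁ = (ν.take cz).drop c₁ ++ ν.drop cz := by
      conv_lhs => rw [← List.take_append_drop cz ν]
      rw [List.drop_append_of_le_length (by rw [hlen]; exact hc₁)]
    rw [hsplit] at hb
    rcases List.mem_append.1 hb with h | h
    · exact ⟨b, h, hbt⟩
    · exact absurd (hdropf b h) (by simp [hbt])
  refine ⟨hdisj, ⟨?_, ?_, ?_⟩, hsupp⟩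
  · intro ν hν
    rw [hsupp] at hν
    rcases Finset.mem_union.1 hν with h | h
    · rw [hyval ν h]; exact hy.1 ν h
    · rw [hzval ν h]; exact hz.1 ν h
  · intro ν hν
    rw [hsupp] at hν
    rcases Finset.mem_union.1 hν with h | h
    · obtain ⟨h1, h2, h3, h4⟩ := hy.2.1 ν h
      refine ⟨by omega, by omega, ?_, h4⟩
      intro b hb
      exact h3 b (drop_le_drop hc₁ _ hb)
    · obtain ⟨h1, h2, h3, b, hb, hbt⟩ := hz.2.1 ν h
      exact ⟨by omega, h2, h3, b, drop_le_drop hn₀ _ hb, hbt⟩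
  · intro ν hν ν' hν' htake
    rw [hsupp] at hν hν'
    have cross : ∀ μ ∈ y.support, ∀ μ' ∈ z.support, μ.take cz ≠ μ'.take cz := by
      intro μ hμ μ' hμ' he
      obtain ⟨b, hb, hbt⟩ := hztrue μ' hμ'
      rw [← he] at hb
      exact absurd (hyfalse μ hμ b hb) (by simp [hbt])
    rcases Finset.mem_union.1 hν with h | h <;> rcases Finset.mem_union.1 hν' with h' | h'
    · apply hy.2.2 ν h ν' h'
      have : (ν.take cz).take c₁ = (ν'.take cz).take c₁ := by rw [htake]
      rwa [List.take_take, List.take_take, min_eq_left hc₁] at this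
    · exact absurd htake (cross ν h ν' h')
    · exact absurd htake.symm (cross ν' h' ν h)
    · exact hz.2.2 ν h ν' h' htake

lemma mass_add {y z : Node →₀ ℝ} (hdisj : Disjoint y.support z.support) :
    massOf (y + z) = massOf y + massOf z := by
  classical
  rw [massOf, Finsupp.support_add_eq hdisj, Finset.sum_union hdisj]
  rw [massOf, massOf]
  congr 1
  · refine Finset.sum_congr rfl fun φ hφ => ?_
    have : z φ = 0 := Finsupp.notMem_support_iff.1 (Finset.disjoint_left.1 hdisj hφ)
    simp [this]
  · refine Finset.sum_congr rfl fun φ hφ => ?_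
    have : y φ = 0 := Finsupp.notMem_support_iff.1 (Finset.disjoint_right.1 hdisj hφ)
    simp [this]

/-- Witness for nonemptiness of the classes. -/
lemma good_witness (n D cap : ℕ) (h : n < cap) :
    ∃ x : Node →₀ ℝ, Good n D cap x ∧ x.support.Nonempty := by
  classical
  set ν : Node := List.replicate n false ++ true :: List.replicate (max D cap) false with hν
  have hlen : ν.length = n + 1 + max D cap := by simp [hν]; omega
  refine ⟨Finsupp.single ν 1, ⟨?_, ?_, ?_⟩, ?_⟩
  all_goals (try intro μ hμ)
  · rw [Finsupp.support_single_ne_zero _ one_ne_zero, Finset.mem_singleton] at hμ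
    subst hμ
    simp
  · rw [Finsupp.support_single_ne_zero _ one_ne_zero, Finset.mem_singleton] at hμ
    subst hμ
    refine ⟨by omega, by omega, ?_, ?_⟩
    · intro b hb
      rw [show ν = (List.replicate n false ++ [true]) ++ List.replicate (max D cap) false by
        simp [hν]] at hb
      rw [List.drop_append] at hb
      rcases List.mem_append.1 hb with h' | h'
      · exfalso
        have : ((List.replicate n false ++ [true]).drop cap) = [] := by
          apply List.drop_eq_nil_of_le
          simp
          omega
        simp [this] at h'
      · exact List.eq_of_mem_replicate (List.mem_of_mem_drop h')
    · refine ⟨true, ?_, rfl⟩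
      have : ν.drop n = true :: List.replicate (max D cap) false := by
        rw [hν, List.drop_append]
        simp
      rw [this]
      simp
  · intro μ' hμ' _
    rw [Finsupp.support_single_ne_zero _ one_ne_zero, Finset.mem_singleton] at hμ hμ'
    rw [hμ, hμ']
  · rw [Finsupp.support_single_ne_zero _ one_ne_zero]
    exact ⟨ν, Finset.mem_singleton_self ν⟩

end TreeAux

set_option maxHeartbeats 1000000
open TreeAux
/-- **Theorem 7.** There is no equivalent `1`-β norm on the space `Y` (the completion
of `(c₀₀(T), ‖·‖_Y)`, represented by a Banach space `Y` with a dense linear isometry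
`j`): if `N` is a norm on `Y` with `c‖x‖ ≤ N x ≤ C‖x‖` for some `c, C > 0`, then
`(Y, N)` is not `1`-β. -/
theorem no_equivalent_one_beta_norm_on_Y
    (Y : Type*) [NormedAddCommGroup Y] [NormedSpace ℝ Y] [CompleteSpace Y]
    (j : (Node →₀ ℝ) →ₗ[ℝ] Y) (hdense : DenseRange j)
    (hiso : ∀ y : Node →₀ ℝ, ‖j y‖ = normY y)
    (N : Y → ℝ) (hN : IsNormF N)
    (c C : ℝ) (hc : 0 < c) (hC : 0 < C)
    (hlow : ∀ x : Y, c * ‖x‖ ≤ N x) (hup : ∀ x : Y, N x ≤ C * ‖x‖) :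
    ¬ OneBetaWith N := by
  classical
  intro hβ
  obtain ⟨htri, hsmul, hzero⟩ := hN
  -- the norm `N ∘ j` on finitely supported vectors
  set f : (Node →₀ ℝ) → ℝ := fun v => N (j v) with hf_def
  have hflow : ∀ v, c * normY v ≤ f v := fun v => by
    simpa [hf_def, hiso v] using hlow (j v)
  have hfup : ∀ v, f v ≤ C * normY v := fun v => by
    simpa [hf_def, hiso v] using hup (j v)
  -- ratio sets and their infima
  set R : ℕ → ℕ → ℕ → Set ℝ := fun n D cap =>
    {r | ∃ v : Node →₀ ℝ, Good n D cap v ∧ v.support.Nonempty ∧ r = f v / massOf v}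
    with hR_def
  have hmemR : ∀ {n D cap : ℕ} {v : Node →₀ ℝ}, Good n D cap v → v.support.Nonempty →
      f v / massOf v ∈ R n D cap := by
    intro n D cap v h1 h2
    exact ⟨v, h1, h2, rfl⟩
  have hRlb : ∀ n D cap, ∀ r ∈ R n D cap, c ≤ r := by
    rintro n D cap r ⟨v, hg, hne, rfl⟩
    have hm : 0 < massOf v := good_mass_pos hg hne
    rw [le_div_iff₀ hm]
    calc c * massOf v = c * normY v := by rw [good_normY_eq hg]
      _ ≤ f v := hflow v
  have hRub : ∀ n D cap, ∀ r ∈ R n D cap, r ≤ C := by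
    rintro n D cap r ⟨v, hg, hne, rfl⟩
    have hm : 0 < massOf v := good_mass_pos hg hne
    rw [div_le_iff₀ hm]
    calc f v ≤ C * normY v := hfup v
      _ = C * massOf v := by rw [good_normY_eq hg]
  have hRne : ∀ n D cap, n < cap → (R n D cap).Nonempty := by
    intro n D cap h
    obtain ⟨v, hg, hne⟩ := good_witness n D cap h
    exact ⟨_, hmemR hg hne⟩
  have hRmem : ∀ n D cap (r : ℝ), r ∈ R n D cap →
      ∃ v : Node →₀ ℝ, Good n D cap v ∧ v.support.Nonempty ∧ r = f v / massOf v :=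
    fun n D cap r hr => hr
  set lam : ℕ → ℕ → ℕ → ℝ := fun n D cap => sInf (R n D cap) with hlam_def
  have hlam_bdd : ∀ n D cap, BddBelow (R n D cap) := fun n D cap => ⟨c, hRlb n D cap⟩
  have hlam_lb : ∀ n D cap, n < cap → c ≤ lam n D cap := fun n D cap h =>
    le_csInf (hRne n D cap h) (hRlb n D cap)
  have hlam_ub : ∀ n D cap, n < cap → lam n D cap ≤ C := by
    intro n D cap h
    obtain ⟨r, hr⟩ := hRne n D cap h
    exact le_trans (csInf_le (hlam_bdd n D cap) hr) (hRub n D cap r hr)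
  have hlam_le : ∀ {n D cap : ℕ} {v : Node →₀ ℝ}, Good n D cap v → v.support.Nonempty →
      lam n D cap * massOf v ≤ f v := by
    intro n D cap v h1 h2
    have := csInf_le (hlam_bdd n D cap) (hmemR h1 h2)
    rw [le_div_iff₀ (good_mass_pos h1 h2)] at this
    exact this
  have hlam_exists_lt : ∀ n D cap (a : ℝ), n < cap → lam n D cap < a →
      ∃ r ∈ R n D cap, r < a := fun n D cap a h ha =>
    exists_lt_of_csInf_lt (hRne n D cap h) ha
  clear_value R
  set hfn : ℕ → ℕ → ℝ := fun n cap => ⨆ D : ℕ, lam n D cap with hhfn_def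
  have hfn_bddrange : ∀ n cap, n < cap → BddAbove (Set.range fun D => lam n D cap) := by
    intro n cap h
    exact ⟨C, by rintro r ⟨D, rfl⟩; exact hlam_ub n D cap h⟩
  have hfn_lb : ∀ n cap, n < cap → c ≤ hfn n cap := fun n cap h =>
    le_trans (hlam_lb n 0 cap h) (le_ciSup (hfn_bddrange n cap h) 0)
  have hfn_ub : ∀ n cap, n < cap → hfn n cap ≤ C := fun n cap h =>
    ciSup_le fun D => hlam_ub n D cap h
  have hlam_le_hfn : ∀ n D cap, n < cap → lam n D cap ≤ hfn n cap := fun n D cap h =>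
    le_ciSup (hfn_bddrange n cap h) D
  have hfn_exists_lt : ∀ n cap (a : ℝ), a < hfn n cap → ∃ D, a < lam n D cap := by
    intro n cap a ha
    exact exists_lt_of_lt_ciSup ha
  set Hfn : ℕ → ℝ := fun n => ⨅ k : ℕ, hfn n (n + 1 + k) with hHfn_def
  have hHfn_lb : ∀ n, c ≤ Hfn n := fun n =>
    le_ciInf fun k => hfn_lb n (n + 1 + k) (by omega)
  have hHfn_bddrange : ∀ n, BddBelow (Set.range fun k => hfn n (n + 1 + k)) := by
    intro n
    exact ⟨c, by rintro r ⟨k, rfl⟩; exact hfn_lb n (n + 1 + k) (by omega)⟩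
  have hHfn_ub : ∀ n, Hfn n ≤ C := fun n =>
    le_trans (ciInf_le (hHfn_bddrange n) 0) (hfn_ub n (n + 1 + 0) (by omega))
  have hHfn_eq : ∀ n, Hfn n = ⨅ k : ℕ, hfn n (n + 1 + k) := fun n => rfl
  have hHfn_le_hfn : ∀ n k, Hfn n ≤ hfn n (n + 1 + k) := fun n k =>
    ciInf_le (hHfn_bddrange n) k
  have hfn_eq : ∀ n cap, hfn n cap = ⨆ D : ℕ, lam n D cap := fun n cap => rfl
  set Hs : ℝ := ⨆ n : ℕ, Hfn n with hHs_def
  have hHs_eq : Hs = ⨆ n : ℕ, Hfn n := rfl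
  have hHs_bddrange : BddAbove (Set.range Hfn) := ⟨C, by rintro r ⟨n, rfl⟩; exact hHfn_ub n⟩
  have hHs_lb : c ≤ Hs := le_trans (hHfn_lb 0) (le_ciSup hHs_bddrange 0)
  have hHs_ub : Hs ≤ C := ciSup_le hHfn_ub
  have hHfnHs : ∀ n, Hfn n ≤ Hs := fun n => le_ciSup hHs_bddrange n
  have hHfn_exists_lt : ∀ n (a : ℝ), Hfn n < a → ∃ k, hfn n (n + 1 + k) < a := by
    intro n a ha
    exact exists_lt_of_ciInf_lt ha
  have hHs_exists_lt : ∀ a : ℝ, a < Hs → ∃ n, a < Hfn n := by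
    intro a ha
    exact exists_lt_of_lt_ciSup ha
  clear_value Hs
  clear hHs_eq hHs_def
  clear_value Hfn
  clear hHfn_eq hHfn_def
  clear_value hfn
  clear hfn_eq hhfn_def
  clear_value lam
  clear hlam_def
  -- apply the 1-β property with ε = c / C
  have hε : (0:ℝ) < c / C := div_pos hc hC
  obtain ⟨δ, hδ0, hδ1, hmain⟩ := hβ (c / C) hε
  set γ : ℝ := c * δ / 8 with hγ_def
  have hγ : 0 < γ := by positivity
  -- choose the parameters
  obtain ⟨n₀, hn₀⟩ : ∃ n₀, Hs - γ < Hfn n₀ := hHs_exists_lt _ (by linarith)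
  obtain ⟨k₁, hk₁⟩ : ∃ k, hfn n₀ (n₀ + 1 + k) < Hfn n₀ + γ :=
    hHfn_exists_lt n₀ _ (by linarith)
  set c₁ : ℕ := n₀ + 1 + k₁ with hc₁_def
  have hn₀c₁ : n₀ < c₁ := by omega
  obtain ⟨k₂, hk₂⟩ : ∃ k, hfn c₁ (c₁ + 1 + k) < Hfn c₁ + γ :=
    hHfn_exists_lt c₁ _ (by linarith)
  set cz : ℕ := c₁ + 1 + k₂ with hcz_def
  have hc₁cz : c₁ < cz := by omega
  have hn₀cz : n₀ < cz := by omega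
  have hHfc₁_le : Hfn c₁ ≤ Hs := hHfnHs c₁
  have hk₂' : hfn c₁ cz < Hs + γ := lt_of_lt_of_le hk₂ (by linarith)
  have hHfn₀_le : Hfn n₀ ≤ hfn n₀ cz := by
    have := hHfn_le_hfn n₀ (k₁ + 1 + k₂)
    rwa [show n₀ + 1 + (k₁ + 1 + k₂) = cz by omega] at this
  obtain ⟨D₀, hD₀⟩ : ∃ D₀, hfn n₀ cz - γ < lam n₀ D₀ cz :=
    hfn_exists_lt n₀ cz _ (by linarith)
  have hlamD₀ : Hs - 2*γ < lam n₀ D₀ cz := by linarith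
  set Dy : ℕ := max D₀ cz with hDy_def
  -- choose the vector y
  have hylam : lam n₀ Dy c₁ < Hs + 2*γ := by
    have h1 := hlam_le_hfn n₀ Dy c₁ hn₀c₁
    have h2 := hHfnHs n₀
    linarith
  obtain ⟨ry, hryR, hry⟩ : ∃ r ∈ R n₀ Dy c₁, r < Hs + 2*γ :=
    hlam_exists_lt n₀ Dy c₁ _ hn₀c₁ hylam
  obtain ⟨y, hyG, hyne, hryv⟩ := hRmem _ _ _ _ hryR
  -- choose the z-family
  have hzex : ∀ D : ℕ, ∃ v : Node →₀ ℝ, Good c₁ D cz v ∧ v.support.Nonempty ∧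
      f v / massOf v < Hs + 2*γ := by
    intro D
    have hzlam : lam c₁ D cz < Hs + 2*γ := by
      have h1 := hlam_le_hfn c₁ D cz hc₁cz
      linarith
    obtain ⟨r, hrR, hr⟩ := hlam_exists_lt c₁ D cz _ hc₁cz hzlam
    obtain ⟨v, h1, h2, rfl⟩ := hRmem _ _ _ _ hrR
    exact ⟨v, h1, h2, hr⟩
  choose Z hZG hZne hZr using hzex
  set Dz : ℕ → ℕ := fun m => Nat.rec (max D₀ cz)
    (fun m ih => max (ih + 1) (((Z ih).support.sup List.length) + 1)) m with hDz_def
  have hDz0 : Dz 0 = max D₀ cz := rfl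
  have hDzsucc_eq : ∀ m, Dz (m + 1) =
      max (Dz m + 1) (((Z (Dz m)).support.sup List.length) + 1) := fun m => rfl
  have hDzsucc : ∀ m, Dz m < Dz (m + 1) := fun m => by
    rw [hDzsucc_eq m]
    exact lt_of_lt_of_le (Nat.lt_succ_self _) (le_max_left _ _)
  have hDzmono : ∀ m' m, m ≤ m' → Dz m ≤ Dz m' := by
    intro m'
    induction m' with
    | zero =>
      intro m h
      have hm : m = 0 := by omega
      rw [hm]
    | succ k ih =>
      intro m h
      rcases Nat.lt_or_ge m (k+1) with h' | h'
      · exact le_trans (ih m (by omega)) (le_of_lt (hDzsucc k))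
      · have hm : m = k + 1 := by omega
        rw [hm]
  have hDzD₀ : ∀ m, D₀ ≤ Dz m := fun m =>
    le_trans (le_trans (le_max_left D₀ cz) (le_of_eq hDz0.symm)) (hDzmono m 0 (by omega))
  clear_value Dz
  set z : ℕ → (Node →₀ ℝ) := fun m => Z (Dz m) with hz_def
  have hzG : ∀ m, Good c₁ (Dz m) cz (z m) := fun m => hZG (Dz m)
  have hzne : ∀ m, (z m).support.Nonempty := fun m => hZne (Dz m)
  have hzr : ∀ m, f (z m) / massOf (z m) < Hs + 2*γ := fun m => hZr (Dz m)
  have hzsup_eq : ∀ m, (z m).support.sup List.length = (Z (Dz m)).support.sup List.length :=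
    fun m => rfl
  have hzlen_lt : ∀ m, ∀ ν ∈ (z m).support, ν.length < Dz (m + 1) := by
    intro m ν hν
    have h1 : ν.length ≤ (Z (Dz m)).support.sup List.length := by
      rw [← hzsup_eq m]
      exact Finset.le_sup hν
    rw [hDzsucc_eq m]
    exact lt_of_lt_of_le (Nat.lt_succ_of_le h1) (le_max_right _ _)
  clear_value z
  clear hz_def
  have hzdisj : ∀ m m', m < m' → Disjoint (z m).support (z m').support := by
    intro m m' h
    refine Finset.disjoint_left.2 fun ν hν hν' => ?_
    have h1 : ν.length < Dz (m + 1) := hzlen_lt m ν hν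
    have h2 : Dz m' ≤ ν.length := ((hzG m').2.1 ν hν').1
    have h3 : Dz (m + 1) ≤ Dz m' := hDzmono m' (m + 1) (by omega)
    omega
  -- normalize
  have hfypos : 0 < f y := by
    have h1 : 0 < massOf y := good_mass_pos hyG hyne
    have := hflow y
    rw [good_normY_eq hyG] at this
    nlinarith
  have hfzpos : ∀ m, 0 < f (z m) := by
    intro m
    have h1 : 0 < massOf (z m) := good_mass_pos (hzG m) (hzne m)
    have := hflow (z m)
    rw [good_normY_eq (hzG m)] at this
    nlinarith
  set yb : Node →₀ ℝ := (f y)⁻¹ • y with hyb_def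
  set zb : ℕ → (Node →₀ ℝ) := fun m => (f (z m))⁻¹ • z m with hzb_def
  obtain ⟨hybG0, hybsupp0, hybmass0⟩ := good_smul hyG (inv_pos.2 hfypos)
  have hybG : Good n₀ Dy c₁ yb := hybG0
  have hybsupp : yb.support = y.support := hybsupp0
  have hybmass : massOf yb = (f y)⁻¹ * massOf y := hybmass0
  clear hybG0 hybsupp0 hybmass0
  have hzbG : ∀ m, Good c₁ (Dz m) cz (zb m) := fun m =>
    (good_smul (hzG m) (inv_pos.2 (hfzpos m))).1
  have hzbsupp : ∀ m, (zb m).support = (z m).support := fun m =>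
    (good_smul (hzG m) (inv_pos.2 (hfzpos m))).2.1
  have hzbmass : ∀ m, massOf (zb m) = (f (z m))⁻¹ * massOf (z m) := fun m =>
    (good_smul (hzG m) (inv_pos.2 (hfzpos m))).2.2
  -- the unit vectors
  have hyb_eq : yb = (f y)⁻¹ • y := rfl
  have hzb_eq : ∀ m, zb m = (f (z m))⁻¹ • z m := fun m => rfl
  clear_value yb
  clear_value zb
  clear hyb_def hzb_def
  set x : Y := j yb with hx_def
  set u : ℕ → Y := fun m => j (zb m) with hu_def
  have hx_eq : x = j yb := rfl
  have hu_eq : ∀ m, u m = j (zb m) := fun m => rfl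
  clear_value x
  clear_value u
  clear hx_def hu_def
  have hNsmul : ∀ (a : ℝ) (v : Node →₀ ℝ), N (j (a • v)) = |a| * N (j v) := by
    intro a v
    rw [map_smul, hsmul]
  have hfj : ∀ v : Node →₀ ℝ, N (j v) = f v := fun v => rfl
  have hNx : N x = 1 := by
    rw [hx_eq, hyb_eq, hNsmul, abs_of_pos (inv_pos.2 hfypos), hfj]
    exact inv_mul_cancel₀ (ne_of_gt hfypos)
  have hNu : ∀ m, N (u m) = 1 := by
    intro m
    rw [hu_eq m, hzb_eq m, hNsmul, abs_of_pos (inv_pos.2 (hfzpos m)), hfj]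
    exact inv_mul_cancel₀ (ne_of_gt (hfzpos m))
  -- masses of the normalized vectors
  have hK : (0:ℝ) < Hs + 2*γ := by linarith
  have hmassyb : (1:ℝ) / (Hs + 2*γ) < massOf yb := by
    have h1 : 0 < massOf y := good_mass_pos hyG hyne
    have h2 : f y / massOf y < Hs + 2*γ := by rw [← hryv]; exact hry
    have h4 : f y < (Hs + 2*γ) * massOf y := (div_lt_iff₀ h1).1 h2
    rw [hybmass, inv_mul_eq_div, div_lt_div_iff₀ hK hfypos]
    linarith [h4]
  have hmasszb : ∀ m, (1:ℝ) / (Hs + 2*γ) < massOf (zb m) := by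
    intro m
    have h1 : 0 < massOf (z m) := good_mass_pos (hzG m) (hzne m)
    have h2 : f (z m) / massOf (z m) < Hs + 2*γ := hzr m
    have h4 : f (z m) < (Hs + 2*γ) * massOf (z m) := (div_lt_iff₀ h1).1 h2
    rw [hzbmass, inv_mul_eq_div, div_lt_div_iff₀ hK (hfzpos m)]
    linarith [h4]
  have hmasszbC : ∀ m, (1:ℝ) / C ≤ massOf (zb m) := by
    intro m
    have h1 : 0 < massOf (z m) := good_mass_pos (hzG m) (hzne m)
    have h2 : f (z m) ≤ C * massOf (z m) := by
      have := hfup (z m)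
      rwa [good_normY_eq (hzG m)] at this
    rw [hzbmass, inv_mul_eq_div, div_le_div_iff₀ hC (hfzpos m)]
    linarith [h2]
  -- separation
  have hsep_lt : ∀ m m', m < m' → c / C ≤ N (u m - u m') := by
    intro m m' h
    have hdisj := hzdisj m m' h
    have key : massOf (zb m) ≤ normY (zb m - zb m') := by
      have hAcc : Acceptable (zb m).support := good_acceptable (hzbG m)
      have h1 := sum_le_normY (zb m - zb m') (zb m).support hAcc
      have h2 : ∑ φ ∈ (zb m).support, |(zb m - zb m') φ| = massOf (zb m) := by
        rw [massOf]
        refine Finset.sum_congr rfl fun φ hφ => ?_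
        have hz' : zb m' φ = 0 := by
          apply Finsupp.notMem_support_iff.1
          rw [hzbsupp m']
          intro hmem
          exact (Finset.disjoint_left.1 hdisj (by rwa [hzbsupp m] at hφ)) hmem
        have hpos := (hzbG m).1 φ hφ
        rw [Finsupp.sub_apply, hz', sub_zero, abs_of_pos hpos]
      rwa [h2] at h1
    have hnorm : N (u m - u m') = f (zb m - zb m') := by
      rw [hu_eq m, hu_eq m', ← map_sub, hfj]
    have hlow2 := hflow (zb m - zb m')
    have : (1:ℝ)/C ≤ normY (zb m - zb m') := le_trans (hmasszbC m) (le_trans (le_refl _) key)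
    rw [hnorm]
    calc c / C = c * (1/C) := by ring
      _ ≤ c * normY (zb m - zb m') := by
          apply mul_le_mul_of_nonneg_left this (le_of_lt hc)
      _ ≤ f (zb m - zb m') := hlow2
  have hNneg : ∀ v : Y, N (-v) = N v := by
    intro v
    have := hsmul (-1) v
    simpa using this
  have hsep : SeparatedWith N (c / C) u := by
    intro m m' hne'
    rcases lt_or_gt_of_ne hne' with h | h
    · exact hsep_lt m m' h
    · calc c / C ≤ N (u m' - u m) := hsep_lt m' m h
        _ = N (-(u m - u m')) := by rw [neg_sub]
        _ = N (u m - u m') := hNneg _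
  -- apply 1-β
  obtain ⟨m, hm⟩ := hmain x (le_of_eq hNx) u (fun m => le_of_eq (hNu m)) hsep
  -- the combined vector
  obtain ⟨hdisj, hwG, hwsupp⟩ := good_add hybG (hzbG m) (by omega) (by omega)
    (le_max_left _ _) (hDzD₀ m) (le_max_right _ _)
  have hwne : (yb + zb m).support.Nonempty := by
    rw [hwsupp]
    exact Finset.Nonempty.mono Finset.subset_union_left (by rwa [hybsupp])
  have hwmass : massOf (yb + zb m) = massOf yb + massOf (zb m) := mass_add hdisj
  have hxum : N (x + u m) = f (yb + zb m) := by
    rw [hx_eq, hu_eq m, ← map_add, hfj]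
  have hlb : lam n₀ D₀ cz * massOf (yb + zb m) ≤ f (yb + zb m) := hlam_le hwG hwne
  have hHspos : 0 < Hs - 2*γ := by
    have : γ < c / 4 := by
      rw [hγ_def]
      nlinarith
    linarith
  have hmassw : 2 / (Hs + 2*γ) < massOf (yb + zb m) := by
    rw [hwmass]
    have := hmasszb m
    have h2 : (2:ℝ) / (Hs + 2*γ) = 1/(Hs + 2*γ) + 1/(Hs + 2*γ) := by ring
    linarith
  have hfinal : (Hs - 2*γ) * (2 / (Hs + 2*γ)) < N (x + u m) := by
    rw [hxum]
    calc (Hs - 2*γ) * (2 / (Hs + 2*γ)) < lam n₀ D₀ cz * massOf (yb + zb m) := by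
          apply mul_lt_mul' (le_of_lt hlamD₀) hmassw (by positivity) ?_
          linarith
      _ ≤ f (yb + zb m) := hlb
  have hm2 : N (x + u m) ≤ 2 * (1 - δ) := by linarith [hm]
  -- numerical contradiction
  have hcontra : (Hs - 2*γ) * (2 / (Hs + 2*γ)) ≤ 2 * (1 - δ) := le_trans (le_of_lt hfinal) hm2
  have h5 : (Hs - 2*γ) * 2 ≤ 2 * (1 - δ) * (Hs + 2*γ) := by
    have := mul_le_mul_of_nonneg_right hcontra (le_of_lt hK)
    calc (Hs - 2*γ) * 2 = (Hs - 2*γ) * (2 / (Hs + 2*γ)) * (Hs + 2*γ) := by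
          field_simp
      _ ≤ 2 * (1 - δ) * (Hs + 2*γ) := this
  rw [hγ_def] at h5
  nlinarith [hHs_lb, mul_pos hδ0 hc, mul_pos (mul_pos hδ0 hδ0) hc]
end

section
/- For every k ∈ ℕ, every k-β Banach space is (k+1)-NUC. -/
open scoped BigOperators

/-- Every `k`-β Banach space is `(k+1)`-NUC. -/
theorem kBeta_implies_succ_kNUC (k : ℕ) (Z : Type*) [NormedAddCommGroup Z]
    [NormedSpace ℝ Z] [CompleteSpace Z] (h : kBeta k Z) : kNUC (k + 1) Z := by
  intro ε hε
  obtain ⟨δ, hδ0, hδ1, hδ⟩ := h ε hε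
  refine ⟨δ, hδ0, hδ1, fun u hu hsep => ?_⟩
  have hsep' : Separated ε (fun n => u (n + 1)) := by
    intro m n hmn
    exact hsep (m + 1) (n + 1) (by omega)
  obtain ⟨ι', hι'mono, hι'⟩ :=
    hδ (u 0) (hu 0) (fun n => u (n + 1)) (fun n => hu (n + 1)) hsep'
  refine ⟨Fin.cases 0 (fun i => ι' i + 1), ?_, ?_⟩
  · intro a b hab
    induction a using Fin.cases with
    | zero =>
      induction b using Fin.cases with
      | zero => exact absurd hab (lt_irrefl _)
      | succ j => simp only [Fin.cases_zero, Fin.cases_succ]; omega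
    | succ i =>
      induction b using Fin.cases with
      | zero =>
        exact absurd hab (by simp [Fin.lt_iff_val_lt_val])
      | succ j =>
        simp only [Fin.cases_succ]
        have hij : i < j := Fin.succ_lt_succ_iff.mp hab
        have := hι'mono hij
        omega
  · have : ∑ i : Fin (k + 1), u (Fin.cases 0 (fun j => ι' j + 1) i)
        = u 0 + ∑ i : Fin k, u (ι' i + 1) := by
      rw [Fin.sum_univ_succ]
      simp
    rw [this]
    have hcast : ((k : ℝ) + 1) = ((k + 1 : ℕ) : ℝ) := by push_cast; ring
    rw [← hcast]
    exact hι'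
end

section
/- For every k ∈ ℕ, every k-β Banach space is NUC (nearly uniformly convex). -/
open scoped BigOperators

/-- Every `k`-β Banach space is nearly uniformly convex. -/
theorem kBeta_implies_NUC (k : ℕ) (Z : Type*) [NormedAddCommGroup Z]
    [NormedSpace ℝ Z] [CompleteSpace Z] (h : kBeta k Z) : NUC Z := by
  intro ε hε
  obtain ⟨δ, hδ0, hδ1, H⟩ := h ε hε
  refine ⟨1 - δ, by linarith, ?_⟩
  intro u hu hsep
  obtain ⟨ι, hmono, hle⟩ := H (u 0) (hu 0) u hu hsep
  have hk1 : (0:ℝ) < (k:ℝ) + 1 := by positivity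
  refine ⟨((k:ℝ)+1)⁻¹ • (u 0 + ∑ i, u (ι i)), ?_, ?_⟩
  · have hconv : Convex ℝ (convexHull ℝ (Set.range u)) := convex_convexHull ℝ _
    have heq : ((k:ℝ)+1)⁻¹ • (u 0 + ∑ i, u (ι i))
        = ∑ j : Fin (k+1), ((k:ℝ)+1)⁻¹ • (Fin.cons (u 0) (fun i => u (ι i)) j) := by
      rw [← Finset.smul_sum, Fin.sum_cons]
    rw [heq]
    apply hconv.sum_mem
    · intro i _; positivity
    · rw [Finset.sum_const, Finset.card_univ, Fintype.card_fin, nsmul_eq_mul]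
      push_cast
      field_simp
    · intro j _
      apply subset_convexHull ℝ (Set.range u)
      refine Fin.cases ?_ ?_ j
      · simp only [Fin.cons_zero]; exact ⟨0, rfl⟩
      · intro i; simp only [Fin.cons_succ]; exact ⟨ι i, rfl⟩
  · rw [norm_smul, Real.norm_eq_abs, abs_of_pos (by positivity)]
    rw [div_le_iff₀ hk1] at hle
    rw [inv_mul_le_iff₀ hk1]
    linarith [hle]
end

section
/- If y, z ∈ c₀₀(T) and supp y ≪ supp z, then ‖y + z‖_X² ≥ ‖y‖_X² + ‖z‖_X². -/
open scoped BigOperators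

/-- The set of values whose supremum defines `normX`. -/
def XSet (x : Node →₀ ℝ) : Set ℝ :=
  { r : ℝ | ∃ (k : ℕ) (A : Fin k → Finset Node),
    (∀ i, Admissible (A i)) ∧ (∀ i j : Fin k, i < j → Before (A i) (A j)) ∧
    r = Real.sqrt (∑ i, (∑ φ ∈ A i, |x φ|) ^ 2) }

lemma normX_eq_sSup (x : Node →₀ ℝ) : normX x = sSup (XSet x) := rfl

lemma zero_mem_XSet (x : Node →₀ ℝ) : (0:ℝ) ∈ XSet x :=
  ⟨0, Fin.elim0, fun i => i.elim0, fun i => i.elim0, by simp⟩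

lemma XSet_nonneg {x : Node →₀ ℝ} {r : ℝ} (hr : r ∈ XSet x) : 0 ≤ r := by
  obtain ⟨k, A, -, -, rfl⟩ := hr; exact Real.sqrt_nonneg _

lemma admissible_subset {A B : Finset Node} (hAB : A ⊆ B) (hB : Admissible B) :
    Admissible A := by
  obtain ⟨n, h1, h2⟩ := hB
  exact ⟨n, fun φ hφ => h1 φ (hAB hφ),
    fun σ hσ φ hφ ψ hψ h1' h2' => h2 σ hσ φ (hAB hφ) ψ (hAB hψ) h1' h2'⟩

lemma before_subset {A B A' B' : Finset Node} (hA : A' ⊆ A) (hB : B' ⊆ B)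
    (h : Before A B) : Before A' B' := fun φ hφ ψ hψ => h φ (hA hφ) ψ (hB hψ)

lemma sum_abs_inter_support (x : Node →₀ ℝ) (A : Finset Node) :
    ∑ φ ∈ A ∩ x.support, |x φ| = ∑ φ ∈ A, |x φ| := by
  refine Finset.sum_subset Finset.inter_subset_left fun φ hφ hφ' => ?_
  have : φ ∉ x.support := fun hs => hφ' (Finset.mem_inter.2 ⟨hφ, hs⟩)
  simp [Finsupp.notMem_support_iff.1 this]

lemma XSet_bddAbove (x : Node →₀ ℝ) : BddAbove (XSet x) := by
  refine ⟨∑ φ ∈ x.support, |x φ|, fun r hr => ?_⟩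
  obtain ⟨k, A, hadm, hbef, rfl⟩ := hr
  set a : Fin k → ℝ := fun i => ∑ φ ∈ A i ∩ x.support, |x φ| with ha
  have ha0 : ∀ i, 0 ≤ a i := fun i => Finset.sum_nonneg fun φ _ => abs_nonneg _
  have hre : ∀ i, (∑ φ ∈ A i, |x φ|) = a i := fun i => (sum_abs_inter_support x (A i)).symm
  have hdisj : ∀ i j : Fin k, i ≠ j →
      Disjoint (A i ∩ x.support) (A j ∩ x.support) := by
    intro i j hij
    rcases lt_or_gt_of_ne hij with hlt | hlt
    · refine Finset.disjoint_left.2 fun φ h1 h2 => ?_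
      exact lt_irrefl φ.length
        (hbef i j hlt φ (Finset.mem_inter.1 h1).1 φ (Finset.mem_inter.1 h2).1)
    · refine Finset.disjoint_left.2 fun φ h1 h2 => ?_
      exact lt_irrefl φ.length
        (hbef j i hlt φ (Finset.mem_inter.1 h2).1 φ (Finset.mem_inter.1 h1).1)
  calc Real.sqrt (∑ i, (∑ φ ∈ A i, |x φ|) ^ 2)
      ≤ Real.sqrt ((∑ i, a i) ^ 2) := by
        refine Real.sqrt_le_sqrt ?_
        simp only [hre]
        exact Finset.sum_sq_le_sq_sum_of_nonneg fun i _ => ha0 i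
    _ = ∑ i, a i := Real.sqrt_sq (Finset.sum_nonneg fun i _ => ha0 i)
    _ = ∑ φ ∈ Finset.univ.biUnion (fun i => A i ∩ x.support), |x φ| := by
        rw [Finset.sum_biUnion]
        intro i _ j _ hij
        exact hdisj i j hij
    _ ≤ ∑ φ ∈ x.support, |x φ| := by
        refine Finset.sum_le_sum_of_subset_of_nonneg ?_ fun φ _ _ => abs_nonneg _
        intro φ hφ
        obtain ⟨i, -, hi⟩ := Finset.mem_biUnion.1 hφ
        exact (Finset.mem_inter.1 hi).2

lemma key_mem (y z : Node →₀ ℝ) (h : Before y.support z.support)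
    {r s : ℝ} (hr : r ∈ XSet y) (hs : s ∈ XSet z) :
    Real.sqrt (r ^ 2 + s ^ 2) ∈ XSet (y + z) := by
  obtain ⟨k, A, hA1, hA2, rfl⟩ := hr
  obtain ⟨l, B, hB1, hB2, rfl⟩ := hs
  have hyz : ∀ φ ∈ y.support, z φ = 0 := by
    intro φ hφ
    by_contra hne
    exact lt_irrefl φ.length (h φ hφ φ (Finsupp.mem_support_iff.2 hne))
  have hzy : ∀ φ ∈ z.support, y φ = 0 := by
    intro φ hφ
    by_contra hne
    exact lt_irrefl φ.length (h φ (Finsupp.mem_support_iff.2 hne) φ hφ)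
  set A' : Fin k → Finset Node := fun i => A i ∩ y.support with hA'
  set B' : Fin l → Finset Node := fun j => B j ∩ z.support with hB'
  have hAval : ∀ i : Fin k, ∑ φ ∈ A' i, |(y + z) φ| = ∑ φ ∈ A i, |y φ| := by
    intro i
    rw [← sum_abs_inter_support y (A i)]
    refine Finset.sum_congr rfl fun φ hφ => ?_
    have hz0 : z φ = 0 := hyz φ (Finset.mem_inter.1 hφ).2
    simp [Finsupp.add_apply, hz0]
  have hBval : ∀ j : Fin l, ∑ φ ∈ B' j, |(y + z) φ| = ∑ φ ∈ B j, |z φ| := by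
    intro j
    rw [← sum_abs_inter_support z (B j)]
    refine Finset.sum_congr rfl fun φ hφ => ?_
    have hy0 : y φ = 0 := hzy φ (Finset.mem_inter.1 hφ).2
    simp [Finsupp.add_apply, hy0]
  refine ⟨k + l, Fin.append A' B', ?_, ?_, ?_⟩
  · intro i
    induction i using Fin.addCases with
    | left i =>
      rw [Fin.append_left]
      exact admissible_subset Finset.inter_subset_left (hA1 i)
    | right j =>
      rw [Fin.append_right]
      exact admissible_subset Finset.inter_subset_left (hB1 j)
  · intro i j hij
    induction i using Fin.addCases with
    | left i =>
      induction j using Fin.addCases with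
      | left j =>
        rw [Fin.append_left, Fin.append_left]
        refine before_subset Finset.inter_subset_left Finset.inter_subset_left
          (hA2 i j ?_)
        simp only [Fin.lt_def, Fin.coe_castAdd] at hij ⊢
        exact hij
      | right j =>
        rw [Fin.append_left, Fin.append_right]
        intro φ hφ ψ hψ
        exact h φ (Finset.mem_inter.1 hφ).2 ψ (Finset.mem_inter.1 hψ).2
    | right i =>
      induction j using Fin.addCases with
      | left j =>
        exfalso
        have hjk := j.isLt
        simp only [Fin.lt_def, Fin.coe_castAdd, Fin.coe_natAdd] at hij
        omega
      | right j =>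
        rw [Fin.append_right, Fin.append_right]
        refine before_subset Finset.inter_subset_left Finset.inter_subset_left
          (hB2 i j ?_)
        simp only [Fin.lt_def, Fin.coe_natAdd] at hij ⊢
        omega
  · congr 1
    rw [Real.sq_sqrt (Finset.sum_nonneg fun i _ => sq_nonneg _),
        Real.sq_sqrt (Finset.sum_nonneg fun i _ => sq_nonneg _),
        Fin.sum_univ_add]
    congr 1
    · exact Finset.sum_congr rfl fun i _ => by rw [Fin.append_left, hAval]
    · exact Finset.sum_congr rfl fun j _ => by rw [Fin.append_right, hBval]
/-- If `y, z ∈ c₀₀(T)` and `supp y ≪ supp z`, then `‖y + z‖_X² ≥ ‖y‖_X² + ‖z‖_X²`. -/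
theorem normX_sq_superadditive (y z : Node →₀ ℝ) (h : Before y.support z.support) :
    normX y ^ 2 + normX z ^ 2 ≤ normX (y + z) ^ 2 := by
  have hby := XSet_bddAbove y
  have hbz := XSet_bddAbove z
  have hbyz := XSet_bddAbove (y + z)
  set M := normX (y + z) with hM
  have hM0 : 0 ≤ M := le_csSup hbyz (zero_mem_XSet _)
  have hy0 : 0 ≤ normX y := le_csSup hby (zero_mem_XSet _)
  have hz0 : 0 ≤ normX z := le_csSup hbz (zero_mem_XSet _)
  have hkey : ∀ r ∈ XSet y, ∀ s ∈ XSet z, r ^ 2 + s ^ 2 ≤ M ^ 2 := by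
    intro r hr s hs
    have h1 : Real.sqrt (r ^ 2 + s ^ 2) ≤ M := le_csSup hbyz (key_mem y z h hr hs)
    have h2 : (0:ℝ) ≤ r ^ 2 + s ^ 2 := by positivity
    calc r ^ 2 + s ^ 2 = Real.sqrt (r ^ 2 + s ^ 2) ^ 2 := (Real.sq_sqrt h2).symm
      _ ≤ M ^ 2 := pow_le_pow_left₀ (Real.sqrt_nonneg _) h1 2
  have hstep : ∀ s ∈ XSet z, normX y ^ 2 + s ^ 2 ≤ M ^ 2 := by
    intro s hs
    have hs2 : s ^ 2 ≤ M ^ 2 := by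
      have := hkey 0 (zero_mem_XSet y) s hs; nlinarith
    have hle : normX y ≤ Real.sqrt (M ^ 2 - s ^ 2) := by
      refine Real.sSup_le (fun r hr => ?_) (Real.sqrt_nonneg _)
      have h1 := hkey r hr s hs
      exact (Real.le_sqrt (XSet_nonneg hr) (by nlinarith [sq_nonneg s])).2 (by linarith)
    have := pow_le_pow_left₀ hy0 hle 2
    rw [Real.sq_sqrt (by linarith)] at this
    linarith
  have hle2 : normX z ≤ Real.sqrt (M ^ 2 - normX y ^ 2) := by
    refine Real.sSup_le (fun s hs => ?_) (Real.sqrt_nonneg _)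
    have h1 := hstep s hs
    exact (Real.le_sqrt (XSet_nonneg hs) (by nlinarith [sq_nonneg s])).2 (by linarith)
  have hM2 : normX y ^ 2 ≤ M ^ 2 := by
    have := hstep 0 (zero_mem_XSet z); nlinarith
  have := pow_le_pow_left₀ hz0 hle2 2
  rw [Real.sq_sqrt (by linarith)] at this
  linarith
end

section
/- Let x, y₀, y₁, y₂ ∈ c₀₀(T) satisfy supp x ∪ supp y₀ ≪ supp y₁ ≪ supp y₂, and suppose ‖y₁·χ_{T_φ}‖_∞ = ‖y₂·χ_{T_φ}‖_∞ for every node φ with |φ| ≤ M, where M = max{|ψ| : ψ ∈ supp x ∪ supp y₀} and ‖·‖_∞ is the sup norm. Let A be an admissible set with min{|φ| : φ ∈ A} ≤ M, and set c = Σ_{φ∈A} |y₁(φ)| and d = Σ_{φ∈A} |y₂(φ)|. Then there exists an admissible set B such that min{|φ| : φ ∈ A} ≤ min{|φ| : φ ∈ B} ≤ max{|φ| : φ ∈ B} ≤ max{|φ| : φ ∈ A}, A ∩ supp y₀ ⊆ B, and Σ_{φ∈B} |y₁(φ)| ≥ c + d. -/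
open scoped BigOperators

section SupOnLemmas

open Classical in
lemma supOn_range_finite (y : Node →₀ ℝ) (S : Set Node) :
    (Set.range fun ψ : Node => if ψ ∈ S then |y ψ| else 0).Finite := by
  classical
  apply Set.Finite.subset
    (((y.support.finite_toSet).image fun ψ => |y ψ|).insert (0 : ℝ))
  rintro r ⟨ψ, rfl⟩
  by_cases h : ψ ∈ S
  · by_cases hy : y ψ = 0
    · left; simp [h, hy]
    · right; exact ⟨ψ, Finsupp.mem_support_iff.mpr hy, by simp [h]⟩
  · left; simp [h]

lemma le_supOn (y : Node →₀ ℝ) (S : Set Node) (ψ : Node) (h : ψ ∈ S) :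
    |y ψ| ≤ supOn y S := by
  classical
  refine le_csSup ((supOn_range_finite y S).bddAbove) ⟨ψ, ?_⟩
  simp [h]

lemma supOn_cases (y : Node →₀ ℝ) (S : Set Node) :
    supOn y S = 0 ∨ ∃ ψ ∈ S, y ψ ≠ 0 ∧ supOn y S = |y ψ| := by
  classical
  have hmem : supOn y S ∈ Set.range fun ψ : Node => if ψ ∈ S then |y ψ| else 0 :=
    Set.Nonempty.csSup_mem ⟨_, ⟨([] : Node), rfl⟩⟩ (supOn_range_finite y S)
  obtain ⟨ψ, hψ⟩ := hmem
  by_cases h : ψ ∈ S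
  · by_cases hy : y ψ = 0
    · left; rw [← hψ]; simp [h, hy]
    · right; exact ⟨ψ, h, hy, by rw [← hψ]; simp [h]⟩
  · left; rw [← hψ]; simp [h]

end SupOnLemmas

/-- **The Claim in Proposition 2.** Let `x, y₀, y₁, y₂ ∈ c₀₀(T)` with
`supp x ∪ supp y₀ ≪ supp y₁ ≪ supp y₂`, let `M = max{|ψ| : ψ ∈ supp x ∪ supp y₀}`,
and suppose `‖y₁ χ_{T_φ}‖_∞ = ‖y₂ χ_{T_φ}‖_∞` for all `|φ| ≤ M`.  If `A` is an
admissible set with `min{|φ| : φ ∈ A} ≤ M` (equivalently: some element of `A` has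
length `≤ M`), `c = ∑_{φ ∈ A} |y₁ φ|` and `d = ∑_{φ ∈ A} |y₂ φ|`, then there is an
admissible set `B` with `min{|φ| : φ ∈ A} ≤ min{|φ| : φ ∈ B}` and
`max{|φ| : φ ∈ B} ≤ max{|φ| : φ ∈ A}` (expressed elementwise below),
`A ∩ supp y₀ ⊆ B`, and `∑_{φ ∈ B} |y₁ φ| ≥ c + d`. -/
theorem claim_admissible_exchange (x y₀ y₁ y₂ : Node →₀ ℝ) (M : ℕ)
    (hM : ((x.support ∪ y₀.support).image List.length).max = (M : WithBot ℕ))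
    (h01 : Before (x.support ∪ y₀.support) y₁.support)
    (h12 : Before y₁.support y₂.support)
    (hsup : ∀ φ : Node, φ.length ≤ M → supOn y₁ (Tsub φ) = supOn y₂ (Tsub φ))
    (A : Finset Node) (hA : Admissible A)
    (hAmin : ∃ φ ∈ A, φ.length ≤ M) :
    ∃ B : Finset Node, B.Nonempty ∧ Admissible B ∧
      (∀ ψ ∈ B, (∃ φ ∈ A, φ.length ≤ ψ.length) ∧ (∃ φ ∈ A, ψ.length ≤ φ.length)) ∧
      A ∩ y₀.support ⊆ B ∧
      (∑ φ ∈ A, |y₁ φ|) + (∑ φ ∈ A, |y₂ φ|) ≤ ∑ φ ∈ B, |y₁ φ| := by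
  classical
  obtain ⟨n, hA1, hA2⟩ := hA
  obtain ⟨φ₀, hφ₀A, hφ₀M⟩ := hAmin
  -- canonical level-n prefixes within A
  have hpre : ∀ φ ∈ A, n ≤ φ.length ∧ (φ.take n).length = n ∧ φ.take n <+: φ := by
    intro φ hφ
    obtain ⟨σ, hσlen, hσpre⟩ := hA1 φ hφ
    have hle : n ≤ φ.length := hσlen ▸ hσpre.length_le
    exact ⟨hle, by simp [hle], List.take_prefix n φ⟩
  have hpreu : ∀ φ ∈ A, ∀ ψ ∈ A, φ.take n = ψ.take n → φ = ψ := by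
    intro φ hφ ψ hψ h
    exact hA2 (φ.take n) (hpre φ hφ).2.1 φ hφ ψ hψ (hpre φ hφ).2.2
      (h ▸ (hpre ψ hψ).2.2)
  have hnM : n ≤ M := le_trans (hpre φ₀ hφ₀A).1 hφ₀M
  -- elements of supp y₁ have length > M
  have hy1len : ∀ ψ ∈ y₁.support, M < ψ.length := by
    obtain ⟨a, ha, halen⟩ := Finset.mem_image.mp (Finset.mem_of_max hM)
    intro ψ hψ
    have halen' : a.length = M := by exact_mod_cast halen
    rw [← halen']
    exact h01 a ha ψ hψ
  -- elements of supp x ∪ supp y₀ have length ≤ M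
  have hunlen : ∀ a ∈ x.support ∪ y₀.support, a.length ≤ M := by
    intro a ha
    have : (a.length : WithBot ℕ) ≤ (M : WithBot ℕ) :=
      hM ▸ Finset.le_max (Finset.mem_image_of_mem List.length ha)
    exact_mod_cast this
  set A₂ : Finset Node := A ∩ y₂.support with hA₂def
  have hA₂sub : A₂ ⊆ A := Finset.inter_subset_left
  -- choice of replacement nodes
  have hchoice : ∀ φ ∈ A₂, ∃ ψ : Node,
      ψ ∈ y₁.support ∧ φ.take n <+: ψ ∧ |y₂ φ| ≤ |y₁ ψ| := by
    intro φ hφ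
    have hφA : φ ∈ A := hA₂sub hφ
    have hφ2 : y₂ φ ≠ 0 := Finsupp.mem_support_iff.mp (Finset.mem_of_mem_inter_right hφ)
    have hlen : (φ.take n).length ≤ M := by rw [(hpre φ hφA).2.1]; exact hnM
    have h1 : |y₂ φ| ≤ supOn y₂ (Tsub (φ.take n)) :=
      le_supOn y₂ _ φ (hpre φ hφA).2.2
    rw [← hsup _ hlen] at h1
    rcases supOn_cases y₁ (Tsub (φ.take n)) with h0 | ⟨ψ, hψT, hψ1, hψeq⟩
    · exact absurd (le_antisymm (h0 ▸ h1) (abs_nonneg _)) (abs_ne_zero.mpr hφ2)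
    · exact ⟨ψ, Finsupp.mem_support_iff.mpr hψ1, hψT, hψeq ▸ h1⟩
  choose! g hg1 hg2 hg3 using hchoice
  -- basic properties of g
  have hgpre : ∀ φ ∈ A₂, (g φ).take n = φ.take n := by
    intro φ hφ
    have h := hg2 φ hφ
    have := (List.prefix_iff_eq_take).mp h
    rw [(hpre φ (hA₂sub hφ)).2.1] at this
    exact this.symm
  have hglen : ∀ φ ∈ A₂, M < (g φ).length := fun φ hφ => hy1len _ (hg1 φ hφ)
  have hglt : ∀ φ ∈ A₂, (g φ).length < φ.length := by
    intro φ hφ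
    exact h12 (g φ) (hg1 φ hφ) φ (Finset.mem_of_mem_inter_right hφ)
  have hA₂long : ∀ φ ∈ A₂, M < φ.length := fun φ hφ =>
    lt_trans (hglen φ hφ) (hglt φ hφ)
  have hginj : ∀ φ ∈ A₂, ∀ ψ ∈ A₂, g φ = g ψ → φ = ψ := by
    intro φ hφ ψ hψ h
    apply hpreu φ (hA₂sub hφ) ψ (hA₂sub hψ)
    rw [← hgpre φ hφ, ← hgpre ψ hψ, h]
  have hgnotin : ∀ φ ∈ A₂, g φ ∉ A \ A₂ := by
    intro φ hφ hmem
    have hgA : g φ ∈ A := (Finset.mem_sdiff.mp hmem).1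
    have : g φ = φ := hpreu _ hgA _ (hA₂sub hφ) (hgpre φ hφ)
    exact (Finset.mem_sdiff.mp hmem).2 (by rw [this]; exact hφ)
  -- the set B
  refine ⟨(A \ A₂) ∪ A₂.image g, ?_, ?_, ?_, ?_, ?_⟩
  · -- nonempty
    refine ⟨φ₀, Finset.mem_union_left _ (Finset.mem_sdiff.mpr ⟨hφ₀A, fun h => ?_⟩)⟩
    exact absurd hφ₀M (not_le.mpr (hA₂long φ₀ h))
  · -- admissible
    refine ⟨n, ?_, ?_⟩
    · intro b hb
      rcases Finset.mem_union.mp hb with hb | hb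
      · exact hA1 b (Finset.mem_sdiff.mp hb).1
      · obtain ⟨φ, hφ, rfl⟩ := Finset.mem_image.mp hb
        exact ⟨φ.take n, (hpre φ (hA₂sub hφ)).2.1, hg2 φ hφ⟩
    · intro σ hσ b₁ hb₁ b₂ hb₂ hσ1 hσ2
      have key : ∀ b ∈ (A \ A₂) ∪ A₂.image g, σ <+: b → ∃ φ ∈ A, φ.take n = σ ∧
          (b ∈ A \ A₂ → b = φ) ∧ (b ∉ A \ A₂ → φ ∈ A₂ ∧ b = g φ) := by
        intro b hb hσb
        have hbtake : σ = b.take n := by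
          have := (List.prefix_iff_eq_take).mp hσb
          rwa [hσ] at this
        rcases Finset.mem_union.mp hb with hb' | hb'
        · refine ⟨b, (Finset.mem_sdiff.mp hb').1, hbtake.symm, fun _ => rfl,
            fun h => absurd hb' h⟩
        · obtain ⟨φ, hφ, rfl⟩ := Finset.mem_image.mp hb'
          refine ⟨φ, hA₂sub hφ, ?_, fun h => absurd h (hgnotin φ hφ), fun _ => ⟨hφ, rfl⟩⟩
          rw [← hgpre φ hφ, ← hbtake]
      obtain ⟨φ₁, hφ₁A, hφ₁σ, hc₁, hc₁'⟩ := key b₁ hb₁ hσ1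
      obtain ⟨φ₂, hφ₂A, hφ₂σ, hc₂, hc₂'⟩ := key b₂ hb₂ hσ2
      have hφeq : φ₁ = φ₂ := hpreu _ hφ₁A _ hφ₂A (hφ₁σ.trans hφ₂σ.symm)
      by_cases h1 : b₁ ∈ A \ A₂ <;> by_cases h2 : b₂ ∈ A \ A₂
      · rw [hc₁ h1, hc₂ h2, hφeq]
      · -- b₁ = φ₁ ∈ A \ A₂, b₂ = g φ₂, φ₂ ∈ A₂, φ₁ = φ₂ contradiction
        obtain ⟨hφ₂A₂, _⟩ := hc₂' h2
        exact absurd (hφeq ▸ hφ₂A₂) (Finset.mem_sdiff.mp (hc₁ h1 ▸ h1)).2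
      · obtain ⟨hφ₁A₂, _⟩ := hc₁' h1
        exact absurd (hφeq ▸ hφ₁A₂ : φ₂ ∈ A₂) (Finset.mem_sdiff.mp (hc₂ h2 ▸ h2)).2
      · obtain ⟨hφ₁A₂, hb₁e⟩ := hc₁' h1
        obtain ⟨hφ₂A₂, hb₂e⟩ := hc₂' h2
        rw [hb₁e, hb₂e, hφeq]
  · -- length bounds
    intro ψ hψ
    rcases Finset.mem_union.mp hψ with hψ' | hψ'
    · have hψA : ψ ∈ A := (Finset.mem_sdiff.mp hψ').1
      exact ⟨⟨ψ, hψA, le_refl _⟩, ⟨ψ, hψA, le_refl _⟩⟩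
    · obtain ⟨φ, hφ, rfl⟩ := Finset.mem_image.mp hψ'
      exact ⟨⟨φ₀, hφ₀A, le_of_lt (lt_of_le_of_lt hφ₀M (hglen φ hφ))⟩,
        ⟨φ, hA₂sub hφ, le_of_lt (hglt φ hφ)⟩⟩
  · -- A ∩ supp y₀ ⊆ B
    intro b hb
    have hbA : b ∈ A := Finset.mem_of_mem_inter_left hb
    have hb0 : b ∈ y₀.support := Finset.mem_of_mem_inter_right hb
    have hbM : b.length ≤ M := hunlen b (Finset.mem_union_right _ hb0)
    refine Finset.mem_union_left _ (Finset.mem_sdiff.mpr ⟨hbA, fun h => ?_⟩)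
    exact absurd hbM (not_le.mpr (hA₂long b h))
  · -- the sum inequality
    have hy1zero : ∀ φ ∈ A₂, y₁ φ = 0 := by
      intro φ hφ
      by_contra h
      have := h12 φ (Finsupp.mem_support_iff.mpr h) φ (Finset.mem_of_mem_inter_right hφ)
      omega
    have hs1 : ∑ φ ∈ A, |y₁ φ| = ∑ φ ∈ A \ A₂, |y₁ φ| := by
      rw [← Finset.sum_sdiff hA₂sub]
      have : ∑ φ ∈ A₂, |y₁ φ| = 0 :=
        Finset.sum_eq_zero fun φ hφ => by rw [hy1zero φ hφ, abs_zero]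
      rw [this, add_zero]
    have hs2 : ∑ φ ∈ A, |y₂ φ| = ∑ φ ∈ A₂, |y₂ φ| := by
      refine (Finset.sum_subset hA₂sub ?_).symm
      intro φ hφA hφ
      have : y₂ φ = 0 := by
        by_contra h
        exact hφ (Finset.mem_inter.mpr ⟨hφA, Finsupp.mem_support_iff.mpr h⟩)
      rw [this, abs_zero]
    have hdisj : Disjoint (A \ A₂) (A₂.image g) := by
      rw [Finset.disjoint_right]
      intro b hb
      obtain ⟨φ, hφ, rfl⟩ := Finset.mem_image.mp hb
      exact hgnotin φ hφ
    rw [Finset.sum_union hdisj, hs1, hs2]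
    have himg : ∑ φ ∈ A₂.image g, |y₁ φ| = ∑ φ ∈ A₂, |y₁ (g φ)| :=
      by rw [Finset.sum_image (f := fun φ => |y₁ φ|) (g := g) (s := A₂) hginj]
    rw [himg]
    exact add_le_add_right (Finset.sum_le_sum hg3) _
end
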